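/- arXiv:1508.03218 — 7 statements merged into one kernel-verified Lean document; each statement's English description precedes it below -/
import Mathlib

section
/- Let N ≥ 2 be an integer. For k = 1,…,N set g_{k,1} := ((k−1)N, 0, 0) and g_{k,2} := (0, (k−1)/N, log N) in ℝ³. Then the 2N sets g_{k,1}*S_N and g_{k,2}*S_N (where translation is by SOL multiplication) are pairwise disjoint and their union is S_{N²} = [0,N²) × [0,1) × [0, 2·log N). Explicitly, g_{k,1}*S_N = [(k−1)N, kN) × [0,1) × [0, log N) and g_{k,2}*S_N = [0,N²) × [(k−1)/N, k/N) × [log N, 2·log N). -/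
/-!
Left translation by `(a, b, c)` is the product of the affine maps `x ↦ eᶜ x + a`,
`y ↦ e⁻ᶜ y + b` and `t ↦ t + c`, so every translate of `S_N` is again a box. The translates
by `g_{k,1}` place `N` boxes of width `N` side by side in `x` at heights `[0, log N)`; those by
`g_{k,2}` are stretched by `N` in `x` and squeezed by `N` in `y`, so they place `N` boxes of
width `1/N` side by side in `y` at heights `[log N, 2 log N)`.
-/

/-- SOL multiplication on ℝ³. -/
noncomputable def solMul (g h : ℝ × ℝ × ℝ) : ℝ × ℝ × ℝ :=
  (g.1 + Real.exp g.2.2 * h.1, g.2.1 + Real.exp (-g.2.2) * h.2.1, g.2.2 + h.2.2)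

/-- The box S_N = [0,N) × [0,1) × [0, log N). -/
noncomputable def solS (N : ℝ) : Set (ℝ × ℝ × ℝ) :=
  Set.Ico 0 N ×ˢ Set.Ico (0 : ℝ) 1 ×ˢ Set.Ico 0 (Real.log N)

/-- The translate tiles: `solT N k 0 = g_{k,1} * S_N` with g_{k,1} = ((k−1)N, 0, 0), and
`solT N k 1 = g_{k,2} * S_N` with g_{k,2} = (0, (k−1)/N, log N). -/
noncomputable def solT (N : ℕ) (k : ℕ) (i : Fin 2) : Set (ℝ × ℝ × ℝ) :=
  if i = 0 then solMul (((k : ℝ) - 1) * N, 0, 0) '' solS N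
  else solMul (0, ((k : ℝ) - 1) / N, Real.log N) '' solS N

open Set Real

section

variable {α : Type*} [LinearOrder α] {f : ℝ → α}

theorem Monotone.biUnion_Icc_Ico_natCast_sub_one (hf : Monotone f) (n : ℕ) :
    ⋃ k ∈ Finset.Icc 1 n, Ico (f (k - 1)) (f k) = Ico (f 0) (f n) := by
  induction n with
  | zero => simp
  | succ n ih =>
    rw [← Finset.insert_Icc_right_eq_Icc_add_one (by omega), Finset.set_biUnion_insert, ih,
      union_comm]
    push_cast
    rw [add_sub_cancel_right, Ico_union_Ico_eq_Ico (hf n.cast_nonneg) (hf (by linarith))]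

theorem Monotone.disjoint_Ico_natCast_sub_one (hf : Monotone f) {k k' : ℕ} (h : k ≠ k') :
    Disjoint (Ico (f (k - 1)) (f k)) (Ico (f (k' - 1)) (f k')) := by
  have key {k k' : ℕ} (h : k < k') : Disjoint (Ico (f (k - 1)) (f k)) (Ico (f (k' - 1)) (f k')) :=
    Ico_disjoint_Ico_same.mono_right <| Ico_subset_Ico_left <| hf <| by
      rw [le_sub_iff_add_le]; exact_mod_cast h
  rcases h.lt_or_gt with h | h
  · exact key h
  · exact (key h).symm

end

theorem solMul_image_Ico_prod (a b c x₀ x₁ y₀ y₁ t₀ t₁ : ℝ) :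
    solMul (a, b, c) '' (Ico x₀ x₁ ×ˢ Ico y₀ y₁ ×ˢ Ico t₀ t₁) =
      Ico (exp c * x₀ + a) (exp c * x₁ + a) ×ˢ Ico (exp (-c) * y₀ + b) (exp (-c) * y₁ + b) ×ˢ
        Ico (t₀ + c) (t₁ + c) := by
  have : solMul (a, b, c) = Prod.map (exp c * · + a) (Prod.map (exp (-c) * · + b) (· + c)) := by
    funext ⟨x, y, t⟩
    simp only [solMul, Prod.map]
    ring_nf
  rw [this, prodMap_image_prod, prodMap_image_prod, image_affine_Ico (exp_pos c),
    image_affine_Ico (exp_pos (-c)), image_add_const_Ico]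

theorem solT_zero (N k : ℕ) :
    solT N k 0 = Ico (((k : ℝ) - 1) * N) (k * N) ×ˢ Ico (0 : ℝ) 1 ×ˢ Ico 0 (log N) := by
  rw [solT, if_pos rfl, solS, solMul_image_Ico_prod]
  simp only [exp_zero, neg_zero, one_mul, add_zero, zero_add]
  rw [sub_mul, one_mul, add_sub_cancel]

theorem solT_one (N k : ℕ) (hN : N ≠ 0) :
    solT N k 1 = Ico (0 : ℝ) ((N : ℝ) ^ 2) ×ˢ Ico (((k : ℝ) - 1) / N) (k / N) ×ˢ
      Ico (log N) (2 * log N) := by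
  rw [solT, if_neg (by decide), solS, solMul_image_Ico_prod, exp_neg, exp_log (by positivity)]
  simp only [mul_zero, zero_add, add_zero, mul_one]
  rw [← sq, ← two_mul, inv_eq_one_div, ← add_div, add_sub_cancel]

section

variable {N : ℕ}

theorem iUnion_solT_zero :
    ⋃ k ∈ Finset.Icc 1 N, solT N k 0 =
      Ico (0 : ℝ) ((N : ℝ) ^ 2) ×ˢ Ico (0 : ℝ) 1 ×ˢ Ico 0 (log N) := by
  simp_rw [solT_zero, ← iUnion₂_prod_const]
  rw [(monotone_mul_right_of_nonneg N.cast_nonneg).biUnion_Icc_Ico_natCast_sub_one, zero_mul, sq]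

theorem iUnion_solT_one (hN : N ≠ 0) :
    ⋃ k ∈ Finset.Icc 1 N, solT N k 1 =
      Ico (0 : ℝ) ((N : ℝ) ^ 2) ×ˢ Ico (0 : ℝ) 1 ×ˢ Ico (log N) (2 * log N) := by
  simp_rw [solT_one N _ hN, ← prod_iUnion₂, ← iUnion₂_prod_const]
  rw [(monotone_div_right_of_nonneg N.cast_nonneg).biUnion_Icc_Ico_natCast_sub_one, zero_div,
    div_self (by exact_mod_cast hN)]

theorem disjoint_solT (hN : N ≠ 0) {k k' : ℕ} {i i' : Fin 2} (h : (k, i) ≠ (k', i')) :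
    Disjoint (solT N k i) (solT N k' i') := by
  match i, i', h with
  | 0, 0, h =>
    rw [solT_zero, solT_zero]
    exact disjoint_prod.2 <| .inl <|
      (monotone_mul_right_of_nonneg N.cast_nonneg).disjoint_Ico_natCast_sub_one (by simpa using h)
  | 0, 1, _ =>
    rw [solT_zero, solT_one N k' hN]
    exact disjoint_prod.2 <| .inr <| disjoint_prod.2 <| .inr Ico_disjoint_Ico_same
  | 1, 0, _ =>
    rw [solT_one N k hN, solT_zero]
    exact disjoint_prod.2 <| .inr <| disjoint_prod.2 <| .inr Ico_disjoint_Ico_same.symm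
  | 1, 1, h =>
    rw [solT_one N k hN, solT_one N k' hN]
    exact disjoint_prod.2 <| .inr <| disjoint_prod.2 <| .inl <|
      (monotone_div_right_of_nonneg N.cast_nonneg).disjoint_Ico_natCast_sub_one (by simpa using h)

end

theorem sol_tiling_of_S_Nsq (N : ℕ) (hN : 2 ≤ N) :
    -- explicit description of the first-layer tiles
    (∀ k ∈ Finset.Icc 1 N,
      solT N k 0 = Set.Ico (((k : ℝ) - 1) * N) ((k : ℝ) * N) ×ˢ Set.Ico (0 : ℝ) 1 ×ˢ
        Set.Ico 0 (Real.log N)) ∧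
    -- explicit description of the second-layer tiles
    (∀ k ∈ Finset.Icc 1 N,
      solT N k 1 = Set.Ico (0 : ℝ) ((N : ℝ) ^ 2) ×ˢ
        Set.Ico (((k : ℝ) - 1) / N) ((k : ℝ) / N) ×ˢ
        Set.Ico (Real.log N) (2 * Real.log N)) ∧
    -- the 2N tiles are pairwise disjoint
    (∀ k ∈ Finset.Icc 1 N, ∀ k' ∈ Finset.Icc 1 N, ∀ i i' : Fin 2,
      (k, i) ≠ (k', i') → Disjoint (solT N k i) (solT N k' i')) ∧
    -- and their union is S_{N²} = [0,N²) × [0,1) × [0, 2 log N)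
    (⋃ k ∈ Finset.Icc 1 N, solT N k 0 ∪ solT N k 1) =
      Set.Ico (0 : ℝ) ((N : ℝ) ^ 2) ×ˢ Set.Ico (0 : ℝ) 1 ×ˢ Set.Ico 0 (2 * Real.log N) := by
  have hN0 : N ≠ 0 := by omega
  refine ⟨fun k _ => solT_zero N k, fun k _ => solT_one N k hN0,
    fun k _ k' _ i i' => disjoint_solT hN0, ?_⟩
  simp_rw [iUnion_union_distrib]
  rw [iUnion_solT_zero, iUnion_solT_one hN0, ← prod_union, ← prod_union,
    Ico_union_Ico_eq_Ico (log_natCast_nonneg N) (by linarith [log_natCast_nonneg N])]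
end

section
/- Let N ≥ 2 be an integer and m ≥ 0 an integer. Then there exists a finite set T ⊆ ℝ³ of cardinality 2^m · N^{2^m − 1} such that the SOL-translates g*S_N for g ∈ T are pairwise disjoint and their union is S_{N^{2^m}} = [0, N^{2^m}) × [0,1) × [0, 2^m·log N). -/
/-!
Cut `S_{N^K}` in the `t`-direction into `K` layers of height `log N`. Left translation by a
point at height `t = k log N` stretches the `x`-direction by `N^k` and shrinks the `y`-direction by
`N^(-k)`, so the translates of `S_N` lying in layer `k` are the boxes of size
`N^(k+1) × N^(-k) × log N`; exactly `N^(K-k-1) · N^k = N^(K-1)` of them, on a grid, fill the layer.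
-/

open Set Function Real

section Grid

variable {α : Type*} [Semiring α] [LinearOrder α] [IsStrictOrderedRing α]

theorem pairwise_disjoint_Ico_natCast_mul {c : α} (hc : 0 ≤ c) :
    Pairwise (Disjoint on fun i : ℕ => Ico (i * c) ((i + 1) * c)) := by
  have hmono : Monotone fun i : ℕ => (i : α) * c := fun i j hij =>
    mul_le_mul_of_nonneg_right (Nat.cast_le.mpr hij) hc
  simpa [Order.succ_eq_add_one] using hmono.pairwise_disjoint_on_Ico_succ

theorem mem_Ico_zero_natCast_mul_iff {c x : α} (hc : 0 ≤ c) {n : ℕ} :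
    x ∈ Ico 0 (n * c) ↔ ∃ i < n, x ∈ Ico ((i : α) * c) ((i + 1) * c) := by
  constructor
  · intro hx
    simpa [and_left_comm] using Ico_subset_biUnion_Ico n (fun i => (i : α) * c) (by simpa using hx)
  · rintro ⟨i, hi, hx⟩
    have hi' : (i : α) + 1 ≤ n := by exact_mod_cast hi
    exact Ico_subset_Ico (by positivity) (by gcongr) hx

end Grid

theorem solMul_image_solS (a b t N : ℝ) :
    solMul (a, b, t) '' solS N =
      Ico a (a + exp t * N) ×ˢ Ico b (b + exp (-t)) ×ˢ Ico t (t + log N) := by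
  have hmap : solMul (a, b, t) =
      Prod.map (fun u => exp t * u + a) (Prod.map (fun v => exp (-t) * v + b) (· + t)) := by
    funext ⟨u, v, s⟩
    simp only [solMul, Prod.map, add_comm]
  rw [hmap, solS, prodMap_image_prod, prodMap_image_prod, image_affine_Ico (exp_pos t),
    image_affine_Ico (exp_pos (-t)), image_add_const_Ico]
  simp only [mul_zero, mul_one, add_zero, add_comm]

/-- The translate carrying `S_N` onto cell `(i, j)` of the layer `k log N ≤ t < (k + 1) log N`. -/
noncomputable def solLayerTranslate (N : ℝ) (k i j : ℕ) : ℝ × ℝ × ℝ :=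
  (i * N ^ (k + 1), j * (N ^ k)⁻¹, k * log N)

theorem solMul_solLayerTranslate_image {N : ℝ} (hN : 0 < N) (k i j : ℕ) :
    solMul (solLayerTranslate N k i j) '' solS N =
      Ico (i * N ^ (k + 1)) ((i + 1) * N ^ (k + 1)) ×ˢ
        Ico (j * (N ^ k)⁻¹) ((j + 1) * (N ^ k)⁻¹) ×ˢ Ico (k * log N) ((k + 1) * log N) := by
  have hexp : exp (k * log N) = N ^ k := by rw [exp_nat_mul, exp_log hN]
  rw [solLayerTranslate, solMul_image_solS, exp_neg, hexp]
  congr 3 <;> ring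

theorem pairwise_disjoint_solMul_solLayerTranslate_image {N : ℝ} (hN : 1 < N) :
    Pairwise (Disjoint on fun p : ℕ × ℕ × ℕ =>
      solMul (solLayerTranslate N p.1 p.2.1 p.2.2) '' solS N) := by
  rintro ⟨k, i, j⟩ ⟨k', i', j'⟩ hne
  have hN0 : 0 < N := zero_lt_one.trans hN
  simp only [onFun, solMul_solLayerTranslate_image hN0]
  by_cases hk : k = k'
  · subst hk
    by_cases hi : i = i'
    · subst hi
      have hj : j ≠ j' := fun h => hne (by rw [h])
      exact (pairwise_disjoint_Ico_natCast_mul (by positivity) hj).set_prod_left _ _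
        |>.set_prod_right _ _
    · exact (pairwise_disjoint_Ico_natCast_mul (by positivity) hi).set_prod_left _ _
  · exact ((pairwise_disjoint_Ico_natCast_mul (log_pos hN).le hk).set_prod_right _ _)
      |>.set_prod_right _ _

theorem solLayerTranslate_injective {N : ℝ} (hN : 1 < N) :
    Injective fun p : ℕ × ℕ × ℕ => solLayerTranslate N p.1 p.2.1 p.2.2 := by
  intro p q hpq
  by_contra hne
  dsimp only at hpq
  have hempty := pairwise_disjoint_solMul_solLayerTranslate_image hN hne
  rw [onFun, hpq, disjoint_self, bot_eq_empty, image_eq_empty] at hempty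
  have hmem : ((0, 0, 0) : ℝ × ℝ × ℝ) ∈ solS N := by
    simp [solS, zero_lt_one.trans hN, log_pos hN]
  simp [hempty] at hmem

/-- Cell `⟨k, (i, j)⟩` of `S_{N^K}`: layer `k < K` is an `N^(K-k-1) × N^k` grid of cells. -/
def solTileIndex (N K : ℕ) : Finset (Σ _ : ℕ, ℕ × ℕ) :=
  (Finset.range K).sigma fun k => Finset.range (N ^ (K - (k + 1))) ×ˢ Finset.range (N ^ k)

theorem card_solTileIndex (N K : ℕ) : (solTileIndex N K).card = K * N ^ (K - 1) := by
  rw [solTileIndex, Finset.card_sigma, Finset.sum_congr rfl, Finset.sum_const, Finset.card_range,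
    smul_eq_mul]
  intro k hk
  rw [Finset.card_product, Finset.card_range, Finset.card_range, ← pow_add]
  congr 1
  have := Finset.mem_range.mp hk
  omega

theorem biUnion_solTileIndex {N : ℕ} (hN : 0 < N) (K : ℕ) :
    ⋃ p ∈ solTileIndex N K, solMul (solLayerTranslate N p.1 p.2.1 p.2.2) '' solS N =
      Ico 0 ((N : ℝ) ^ K) ×ˢ Ico 0 1 ×ˢ Ico 0 (K * log N) := by
  have hN' : (0 : ℝ) < N := by exact_mod_cast hN
  have hlog : 0 ≤ log N := log_nonneg (by exact_mod_cast hN)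
  have hwidth : ∀ k < K, (N : ℝ) ^ K = ((N ^ (K - (k + 1)) : ℕ) : ℝ) * (N : ℝ) ^ (k + 1) := by
    intro k hk
    rw [Nat.cast_pow, ← pow_add, Nat.sub_add_cancel hk]
  have hheight : ∀ k : ℕ, (1 : ℝ) = ((N ^ k : ℕ) : ℝ) * ((N : ℝ) ^ k)⁻¹ := by
    intro k
    rw [Nat.cast_pow, mul_inv_cancel₀ (by positivity)]
  ext ⟨x, y, s⟩
  simp only [mem_iUnion, solTileIndex, Finset.mem_sigma, Finset.mem_product, Finset.mem_range,
    solMul_solLayerTranslate_image hN', mem_prod, exists_prop, Sigma.exists, Prod.exists]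
  rw [mem_Ico_zero_natCast_mul_iff hlog]
  constructor
  · rintro ⟨k, i, j, ⟨hk, hi, hj⟩, hx, hy, hs⟩
    refine ⟨?_, ?_, k, hk, hs⟩
    · rw [hwidth k hk, mem_Ico_zero_natCast_mul_iff (by positivity)]
      exact ⟨i, hi, hx⟩
    · rw [hheight k, mem_Ico_zero_natCast_mul_iff (by positivity)]
      exact ⟨j, hj, hy⟩
  · rintro ⟨hx, hy, k, hk, hs⟩
    rw [hwidth k hk, mem_Ico_zero_natCast_mul_iff (by positivity)] at hx
    rw [hheight k, mem_Ico_zero_natCast_mul_iff (by positivity)] at hy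
    obtain ⟨i, hi, hx⟩ := hx
    obtain ⟨j, hj, hy⟩ := hy
    exact ⟨k, i, j, ⟨hk, hi, hj⟩, hx, hy, hs⟩

theorem exists_solS_tiling_pow {N : ℕ} (hN : 1 < N) (K : ℕ) :
    ∃ T : Finset (ℝ × ℝ × ℝ), T.card = K * N ^ (K - 1) ∧
      (T : Set (ℝ × ℝ × ℝ)).PairwiseDisjoint (fun g => solMul g '' solS N) ∧
      ⋃ g ∈ T, solMul g '' solS N = Ico 0 ((N : ℝ) ^ K) ×ˢ Ico 0 1 ×ˢ Ico 0 (K * log N) := by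
  have hN' : (1 : ℝ) < N := by exact_mod_cast hN
  set F : (Σ _ : ℕ, ℕ × ℕ) → ℝ × ℝ × ℝ := fun p => solLayerTranslate N p.1 p.2.1 p.2.2
  have hF : Injective F :=
    (solLayerTranslate_injective hN').comp (Equiv.sigmaEquivProd ℕ (ℕ × ℕ)).injective
  refine ⟨(solTileIndex N K).image F, ?_, ?_, ?_⟩
  · rw [Finset.card_image_of_injective _ hF, card_solTileIndex]
  · rw [Finset.coe_image, hF.injOn.pairwiseDisjoint_image]
    exact ((pairwise_disjoint_solMul_solLayerTranslate_image hN').comp_of_injective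
      (Equiv.sigmaEquivProd ℕ (ℕ × ℕ)).injective).set_pairwise _
  · rw [Finset.set_biUnion_finset_image, biUnion_solTileIndex (zero_lt_one.trans hN)]

theorem sol_tiling_iterated (N : ℕ) (hN : 2 ≤ N) (m : ℕ) :
    ∃ T : Finset (ℝ × ℝ × ℝ),
      T.card = 2 ^ m * N ^ (2 ^ m - 1) ∧
      (↑T : Set (ℝ × ℝ × ℝ)).PairwiseDisjoint (fun g => solMul g '' solS N) ∧
      (⋃ g ∈ T, solMul g '' solS N) =
        Set.Ico (0 : ℝ) ((N : ℝ) ^ (2 ^ m)) ×ˢ Set.Ico (0 : ℝ) 1 ×ˢ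
          Set.Ico 0 ((2 ^ m : ℝ) * Real.log N) := by
  simpa using exists_solS_tiling_pow hN (2 ^ m)
end

section
/- Let M ≥ 2 be an even integer, λ > 0, and g : ℝ → ℝ. Suppose that for every i ∈ {1,…,M}, |g(iM) − g((i−1)M)| ≤ (1+λ)·|g(M²) − g(0)|/M. Then there exists k ∈ {1,…,M−1} such that both |g(kM) − g((k−1)M)| ≥ (1−λ)·|g(M²) − g(0)|/M and |g((k+1)M) − g(kM)| ≥ (1−λ)·|g(M²) − g(0)|/M. -/
/-!
Write `A = |g(M²) - g(0)| / M` for the average stretch. By the triangle inequality the `M`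
increments sum to at least `M A`. Split them into the `M / 2` pairs of intervals `2j, 2j + 1`.
If no two consecutive increments reach `(1 - λ) A`, then in every pair one of them is below
`(1 - λ) A` while the other is at most `(1 + λ) A`, so every pair sums to less than `2 A` and
all of them to less than `M A`, a contradiction.
-/

open Finset

theorem Finset.sum_range_two_mul {M : Type*} [AddCommMonoid M] (f : ℕ → M) (n : ℕ) :
    ∑ i ∈ range (2 * n), f i = ∑ j ∈ range n, (f (2 * j) + f (2 * j + 1)) := by
  induction n with
  | zero => simp
  | succ n ih =>
    rw [Nat.mul_succ, sum_range_succ, sum_range_succ, sum_range_succ, ih, add_assoc]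

theorem exists_adjacent_ge_of_le_sum_range {b : ℕ → ℝ} {lo hi : ℝ} {n : ℕ}
    (hn : Even n) (hn0 : n ≠ 0) (hb : ∀ i < n, b i ≤ hi)
    (hsum : n * (lo + hi) ≤ 2 * ∑ i ∈ range n, b i) :
    ∃ i, i + 1 < n ∧ lo ≤ b i ∧ lo ≤ b (i + 1) := by
  obtain ⟨m, rfl⟩ := hn
  rw [← two_mul] at *
  by_contra! hnone
  have hpair : ∀ j ∈ range m, b (2 * j) + b (2 * j + 1) < lo + hi := by
    intro j hj
    have hj : j < m := mem_range.mp hj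
    rcases lt_or_ge (b (2 * j)) lo with hlow | hhigh
    · linarith [hb (2 * j + 1) (by omega)]
    · linarith [hb (2 * j) (by omega), hnone (2 * j) (by omega) hhigh]
  have hlt : ∑ i ∈ range (2 * m), b i < m * (lo + hi) := by
    rw [sum_range_two_mul]
    exact (sum_lt_sum_of_nonempty (nonempty_range_iff.mpr (by omega)) hpair).trans_eq (by simp [mul_add])
  push_cast at hsum
  linarith

theorem two_consecutive_intervals_stretched_general (M : ℕ) (hM : 2 ≤ M) (hMeven : Even M)
    (lam : ℝ) (g : ℝ → ℝ)
    (h : ∀ i : ℕ, 1 ≤ i → i ≤ M →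
      |g ((i : ℝ) * M) - g (((i : ℝ) - 1) * M)| ≤
        (1 + lam) * (|g ((M : ℝ) ^ 2) - g 0| / M)) :
    ∃ k : ℕ, 1 ≤ k ∧ k ≤ M - 1 ∧
      (1 - lam) * (|g ((M : ℝ) ^ 2) - g 0| / M) ≤
        |g ((k : ℝ) * M) - g (((k : ℝ) - 1) * M)| ∧
      (1 - lam) * (|g ((M : ℝ) ^ 2) - g 0| / M) ≤
        |g (((k : ℝ) + 1) * M) - g ((k : ℝ) * M)| := by
  set A := |g ((M : ℝ) ^ 2) - g 0| / M
  set b : ℕ → ℝ := fun i ↦ |g (((i : ℝ) + 1) * M) - g ((i : ℝ) * M)|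
  have hb : ∀ i < M, b i ≤ (1 + lam) * A := fun i hi ↦ by
    simpa [b] using h (i + 1) (by omega) (by omega)
  have htel : |g ((M : ℝ) ^ 2) - g 0| ≤ ∑ i ∈ range M, b i := by
    simpa [b, Real.dist_eq, abs_sub_comm, sq] using
      dist_le_range_sum_dist (fun i : ℕ ↦ g (i * M)) M
  have hsum : M * ((1 - lam) * A + (1 + lam) * A) ≤ 2 * ∑ i ∈ range M, b i := by
    have hM0 : (M : ℝ) ≠ 0 := by positivity
    calc (M : ℝ) * ((1 - lam) * A + (1 + lam) * A) = 2 * |g ((M : ℝ) ^ 2) - g 0| := by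
          simp only [A]; field_simp; ring
      _ ≤ _ := by gcongr
  obtain ⟨i, hi, hlo, hlo'⟩ := exists_adjacent_ge_of_le_sum_range hMeven (by omega) hb hsum
  refine ⟨i + 1, by omega, by omega, ?_, ?_⟩
  · simpa [b] using hlo
  · simpa [b, add_assoc, one_add_one_eq_two] using hlo'

theorem two_consecutive_intervals_stretched (M : ℕ) (hM : 2 ≤ M) (hMeven : Even M)
    (lam : ℝ) (hlam : 0 < lam) (g : ℝ → ℝ)
    (h : ∀ i : ℕ, 1 ≤ i → i ≤ M →
      |g ((i : ℝ) * M) - g (((i : ℝ) - 1) * M)| ≤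
        (1 + lam) * (|g ((M : ℝ) ^ 2) - g 0| / M)) :
    ∃ k : ℕ, 1 ≤ k ∧ k ≤ M - 1 ∧
      (1 - lam) * (|g ((M : ℝ) ^ 2) - g 0| / M) ≤
        |g ((k : ℝ) * M) - g (((k : ℝ) - 1) * M)| ∧
      (1 - lam) * (|g ((M : ℝ) ^ 2) - g 0| / M) ≤
        |g (((k : ℝ) + 1) * M) - g ((k : ℝ) * M)| :=
  two_consecutive_intervals_stretched_general M hM hMeven lam g h
end

section
/- Let f : ℝ → ℝ, let M₀ be a positive integer and λ > 0. Suppose that for every integer M ≥ M₀ and every integer c ≥ 0 there exists i ∈ {1,…,M} such that |f(cM² + (i−1)M) − f(cM² + iM)|/M > (1+λ)·|f(cM²) − f((c+1)M²)|/M². Then f is not biLipschitz: for every L ≥ 1 there exist x, y ∈ ℝ violating L⁻¹·|x−y| ≤ |f(x)−f(y)| ≤ L·|x−y|. -/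
/-!
Write `S_s(c) = |f(cs) - f((c+1)s)| / s` for the average stretch of the aligned window
`[cs, (c+1)s]`. The hypothesis at scale `M` says every window at scale `M²` contains a window at
scale `M` whose stretch is more than `1 + λ` times larger. Chaining this down the scales
`M₀^(2^k)` produces a window at scale `M₀` whose stretch is at least `(1 + λ)^k` times that of
`[0, M₀^(2^k)]`. For an `L`-biLipschitz map every stretch lies in `[L⁻¹, L]`, so
`(1 + λ)^k ≤ L²` for all `k`, which is absurd.
-/

noncomputable def windowStretch (f : ℝ → ℝ) (s : ℝ) (c : ℕ) : ℝ :=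
  |f (c * s) - f ((c + 1) * s)| / s

lemma windowStretch_mem_Icc_of_biLipschitz {f : ℝ → ℝ} {L s : ℝ} (hs : 0 < s)
    (hf : ∀ x y : ℝ, L⁻¹ * |x - y| ≤ |f x - f y| ∧ |f x - f y| ≤ L * |x - y|) (c : ℕ) :
    windowStretch f s c ∈ Set.Icc L⁻¹ L := by
  have hlen : |(c : ℝ) * s - (c + 1) * s| = s := by
    rw [show (c : ℝ) * s - (c + 1) * s = -s by ring, abs_neg, abs_of_pos hs]
  obtain ⟨hlo, hup⟩ := hf (c * s) ((c + 1) * s)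
  rw [hlen] at hlo hup
  exact ⟨(le_div_iff₀ hs).2 hlo, (div_le_iff₀ hs).2 hup⟩

lemma exists_stretched_window {f : ℝ → ℝ} {M c : ℕ} {q : ℝ}
    (h : ∃ i : ℕ, 1 ≤ i ∧ i ≤ M ∧
      |f ((c : ℝ) * (M : ℝ) ^ 2 + ((i : ℝ) - 1) * M) -
          f ((c : ℝ) * (M : ℝ) ^ 2 + (i : ℝ) * M)| / M >
        q * (|f ((c : ℝ) * (M : ℝ) ^ 2) - f (((c : ℝ) + 1) * (M : ℝ) ^ 2)| / (M : ℝ) ^ 2)) :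
    ∃ d : ℕ, q * windowStretch f ((M : ℝ) ^ 2) c < windowStretch f M d := by
  obtain ⟨i, hi, -, hst⟩ := h
  obtain ⟨j, rfl⟩ : ∃ j, i = j + 1 := ⟨i - 1, by omega⟩
  refine ⟨c * M + j, ?_⟩
  unfold windowStretch
  convert hst using 5 <;> push_cast <;> ring

lemma exists_pow_mul_le_of_forall_exists_mul_le {g : ℕ → ℕ → ℝ} {q : ℝ} (hq : 0 ≤ q)
    (hstep : ∀ k c, ∃ d, q * g (k + 1) c ≤ g k d) (k c : ℕ) :
    ∃ d, q ^ k * g k c ≤ g 0 d := by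
  induction k generalizing c with
  | zero => exact ⟨c, by simp⟩
  | succ k ih =>
    obtain ⟨d₁, hd₁⟩ := hstep k c
    obtain ⟨d, hd⟩ := ih d₁
    refine ⟨d, ?_⟩
    calc q ^ (k + 1) * g (k + 1) c = q ^ k * (q * g (k + 1) c) := by ring
      _ ≤ q ^ k * g k d₁ := by gcongr
      _ ≤ g 0 d := hd

theorem not_biLipschitz_of_stretched_at_all_scales
    (f : ℝ → ℝ) (M₀ : ℕ) (hM₀ : 1 ≤ M₀) (lam : ℝ) (hlam : 0 < lam)
    (h : ∀ M : ℕ, M₀ ≤ M → ∀ c : ℕ, ∃ i : ℕ, 1 ≤ i ∧ i ≤ M ∧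
      |f ((c : ℝ) * (M : ℝ) ^ 2 + ((i : ℝ) - 1) * M) -
          f ((c : ℝ) * (M : ℝ) ^ 2 + (i : ℝ) * M)| / M >
        (1 + lam) *
          (|f ((c : ℝ) * (M : ℝ) ^ 2) - f (((c : ℝ) + 1) * (M : ℝ) ^ 2)| / (M : ℝ) ^ 2)) :
    ∀ L : ℝ, 1 ≤ L → ∃ x y : ℝ,
      ¬ (L⁻¹ * |x - y| ≤ |f x - f y| ∧ |f x - f y| ≤ L * |x - y|) := by
  intro L hL
  by_contra! hbi
  set scale : ℕ → ℝ := fun k => ((M₀ ^ 2 ^ k : ℕ) : ℝ)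
  have hscale_pos : ∀ k, 0 < scale k := fun k => by positivity
  have hscale_succ : ∀ k, scale (k + 1) = scale k ^ 2 := fun k => by
    simp only [scale, pow_succ, pow_mul, Nat.cast_pow]
  have hstep : ∀ k c, ∃ d, (1 + lam) * windowStretch f (scale (k + 1)) c ≤
      windowStretch f (scale k) d := fun k c => by
    obtain ⟨d, hd⟩ :=
      exists_stretched_window (h (M₀ ^ 2 ^ k) (Nat.le_self_pow (by positivity) M₀) c)
    rw [hscale_succ]
    exact ⟨d, hd.le⟩
  obtain ⟨k, hk⟩ := pow_unbounded_of_one_lt (L * L) (lt_add_of_pos_right 1 hlam)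
  obtain ⟨d, hd⟩ := exists_pow_mul_le_of_forall_exists_mul_le
    (g := fun k => windowStretch f (scale k)) (by linarith) hstep k 0
  have hbig := (windowStretch_mem_Icc_of_biLipschitz (hscale_pos k) hbi 0).1
  have hsmall := (windowStretch_mem_Icc_of_biLipschitz (hscale_pos 0) hbi d).2
  have hL : 0 < L := by linarith
  have hpow : (1 + lam) ^ k * L⁻¹ ≤ L := by
    calc (1 + lam) ^ k * L⁻¹ ≤ (1 + lam) ^ k * windowStretch f (scale k) 0 := by gcongr
      _ ≤ L := hd.trans hsmall
  rw [mul_inv_le_iff₀ hL] at hpow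
  linarith
end

section
/- Fix a, b, R > 0. For r, s > 0 with rs > 1, let B_{r,s} := [0, ar) × [0, bs) × [−log s, log r) ⊆ ℝ³. Then μ(B_{r,s}) = ab·rs·log(rs), and there exists a constant C > 0 (depending only on a, b and R) such that μ(∂_R B_{r,s}) ≤ C·rs for all r, s > 0 with rs ≥ e. -/
open MeasureTheory
open scoped ENNReal

/-!
STATEMENT 10: volume and boundary-volume estimates for the standard Følner boxes
B_{r,s} = [0,ar) × [0,bs) × [−log s, log r) of SOL.
-/

/-- The SOL quasi-distance on ℝ³. -/
noncomputable def solQDist (p q : ℝ × ℝ × ℝ) : ℝ :=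
  Real.exp (-(p.2.2 + q.2.2) / 2) * |p.1 - q.1| +
    Real.exp ((p.2.2 + q.2.2) / 2) * |p.2.1 - q.2.1| + |p.2.2 - q.2.2|

/-- The R-boundary of A ⊆ ℝ³ with respect to the SOL quasi-distance. -/
noncomputable def solBdry (R : ℝ) (A : Set (ℝ × ℝ × ℝ)) : Set (ℝ × ℝ × ℝ) :=
  {p | (∃ q ∈ A, solQDist p q ≤ R) ∧ (∃ q ∉ A, solQDist p q ≤ R)}

/-- The box B_{r,s} = [0,ar) × [0,bs) × [−log s, log r). -/
noncomputable def solBox (a b r s : ℝ) : Set (ℝ × ℝ × ℝ) :=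
  Set.Ico 0 (a * r) ×ˢ Set.Ico 0 (b * s) ×ˢ Set.Ico (-Real.log s) (Real.log r)

/-!
A point `p = (x, y, t)` of `∂_R B` has a witness `q ∈ B` and a witness `q' ∉ B`, both within
`R` of `p`; a distance `≤ R` moves `t` by at most `R`, `x` by at most `R e^{R/2} eᵗ` and `y` by at
most `R e^{R/2} e⁻ᵗ`. If `q'` leaves `B` through the top or bottom face, `p` lies in a slab of
height `2R` over a slightly enlarged base of area `O(rs)`. If it leaves through a face `x = c`,
then `|x - c| ≤ R e^{R/2} eᵗ` with `t ≤ log r + R`, and `∫_{t ≤ log r + R} eᵗ dt = O(r)`, so this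
wedge has volume `O(r) · O(s)`; the faces `y = c` are symmetric, with `e⁻ᵗ` and
`t ≥ -log s - R`. No factor `log (rs)` survives.
-/

open Real Set Metric

theorem volume_prod_prod {α β : Type*} [MeasureSpace α] [MeasureSpace β]
    [SFinite (volume : Measure β)] (s : Set α) (t : Set β) :
    volume (s ×ˢ t) = volume s * volume t := by
  rw [Measure.volume_eq_prod, Measure.prod_prod]

theorem lintegral_ofReal_exp_Iic (T : ℝ) :
    ∫⁻ t in Iic T, ENNReal.ofReal (exp t) = ENNReal.ofReal (exp T) := by
  rw [← ofReal_integral_eq_lintegral_ofReal (integrableOn_exp_Iic T)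
    (ae_of_all _ fun t => (exp_pos t).le), integral_exp_Iic]

theorem lintegral_ofReal_exp_neg_Ici (T : ℝ) :
    ∫⁻ t in Ici T, ENNReal.ofReal (exp (-t)) = ENNReal.ofReal (exp (-T)) := by
  rw [← setLIntegral_congr Ioi_ae_eq_Ici, ← ofReal_integral_eq_lintegral_ofReal
    (integrableOn_exp_neg_Ioi T) (ae_of_all _ fun t => (exp_pos _).le), integral_exp_neg_Ioi]

theorem volume_prod_setOf_mem_closedBall {E : Type*} [MeasurableSpace E] (μ : Measure E)
    [SFinite μ] {s : Set E} (hs : MeasurableSet s) (c : ℝ) {g : E → ℝ} (hg : Measurable g) :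
    (volume.prod μ) {p : ℝ × E | p.2 ∈ s ∧ p.1 ∈ closedBall c (g p.2)} =
      ∫⁻ e in s, ENNReal.ofReal (2 * g e) ∂μ := by
  have hmeas : MeasurableSet {p : ℝ × E | p.2 ∈ s ∧ p.1 ∈ closedBall c (g p.2)} :=
    (measurable_snd hs).inter (measurableSet_le (by fun_prop) (hg.comp measurable_snd))
  rw [Measure.prod_apply_symm hmeas, ← lintegral_indicator hs]
  congr 1 with e
  by_cases he : e ∈ s
  · simp only [indicator_of_mem he, preimage_ofPred_eq, he, true_and]
    exact Real.volume_closedBall c (g e)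
  · simp [he]

def solXWedge (c w T : ℝ) (J : Set ℝ) : Set (ℝ × ℝ × ℝ) :=
  {p | p.2 ∈ J ×ˢ Iic T ∧ p.1 ∈ closedBall c (w * exp p.2.2)}

def solYWedge (c w T : ℝ) : Set (ℝ × ℝ) :=
  {q | q.2 ∈ Ici T ∧ q.1 ∈ closedBall c (w * exp (-q.2))}

theorem volume_solXWedge (c T : ℝ) {w : ℝ} (hw : 0 ≤ w) {J : Set ℝ} (hJ : MeasurableSet J) :
    volume (solXWedge c w T J) = volume J * ENNReal.ofReal (2 * (w * exp T)) := by
  rw [Measure.volume_eq_prod, solXWedge, volume_prod_setOf_mem_closedBall _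
    (hJ.prod measurableSet_Iic) c (g := fun e => w * exp e.2) (by fun_prop),
    Measure.volume_eq_prod, setLIntegral_prod _ (by fun_prop)]
  simp only [← mul_assoc, ENNReal.ofReal_mul (by positivity : 0 ≤ 2 * w)]
  rw [lintegral_const_mul _ (by fun_prop), lintegral_ofReal_exp_Iic, setLIntegral_const,
    ENNReal.ofReal_mul (by positivity)]
  ring

theorem volume_solYWedge (c T : ℝ) {w : ℝ} (hw : 0 ≤ w) :
    volume (solYWedge c w T) = ENNReal.ofReal (2 * (w * exp (-T))) := by
  rw [Measure.volume_eq_prod, solYWedge, volume_prod_setOf_mem_closedBall _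
    measurableSet_Ici c (g := fun t => w * exp (-t)) (by fun_prop)]
  simp only [← mul_assoc, ENNReal.ofReal_mul (by positivity : 0 ≤ 2 * w)]
  rw [lintegral_const_mul _ (by fun_prop), lintegral_ofReal_exp_neg_Ici,
    ENNReal.ofReal_mul (by positivity)]

theorem le_mul_exp_of_exp_neg_mul_le {A R u v : ℝ} (hA : 0 ≤ A) (h : exp (-v) * A ≤ R)
    (hvu : v ≤ u) : A ≤ R * exp u := by
  have hR : 0 ≤ R := (mul_nonneg (exp_pos _).le hA).trans h
  rw [exp_neg, inv_mul_le_iff₀ (exp_pos v), mul_comm] at h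
  exact h.trans (by gcongr)

section solQDist

variable {R : ℝ} {p q : ℝ × ℝ × ℝ}

theorem abs_t_sub_le_of_solQDist_le (h : solQDist p q ≤ R) : |p.2.2 - q.2.2| ≤ R := by
  unfold solQDist at h
  nlinarith [abs_nonneg (p.1 - q.1), abs_nonneg (p.2.1 - q.2.1),
    exp_pos (-(p.2.2 + q.2.2) / 2), exp_pos ((p.2.2 + q.2.2) / 2)]

theorem abs_x_sub_le_of_solQDist_le (h : solQDist p q ≤ R) :
    |p.1 - q.1| ≤ R * exp (R / 2) * exp p.2.2 := by
  have ht := abs_le.mp (abs_t_sub_le_of_solQDist_le h)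
  unfold solQDist at h
  rw [mul_assoc, ← exp_add]
  refine le_mul_exp_of_exp_neg_mul_le (v := (p.2.2 + q.2.2) / 2) (abs_nonneg _) ?_ (by linarith)
  rw [← neg_div]
  nlinarith [abs_nonneg (p.2.1 - q.2.1), abs_nonneg (p.2.2 - q.2.2),
    exp_pos ((p.2.2 + q.2.2) / 2)]

theorem abs_y_sub_le_of_solQDist_le (h : solQDist p q ≤ R) :
    |p.2.1 - q.2.1| ≤ R * exp (R / 2) * exp (-p.2.2) := by
  have ht := abs_le.mp (abs_t_sub_le_of_solQDist_le h)
  unfold solQDist at h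
  rw [mul_assoc, ← exp_add]
  refine le_mul_exp_of_exp_neg_mul_le (v := -(p.2.2 + q.2.2) / 2) (abs_nonneg _) ?_ (by linarith)
  rw [neg_div, neg_neg]
  nlinarith [abs_nonneg (p.1 - q.1), abs_nonneg (p.2.2 - q.2.2),
    exp_pos (-(p.2.2 + q.2.2) / 2)]

end solQDist

theorem mem_closedBall_or_mem_closedBall_of_mem_Ico_of_notMem {a b u v z δ : ℝ}
    (hu : u ∈ Ico a b) (hv : v ∉ Ico a b) (hzu : |z - u| ≤ δ) (hzv : |z - v| ≤ δ) :
    z ∈ closedBall a δ ∨ z ∈ closedBall b δ := by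
  simp only [mem_closedBall, Real.dist_eq, abs_le, mem_Ico, not_and_or, not_le, not_lt] at *
  rcases hv with hv | hv
  · exact Or.inl ⟨by linarith, by linarith⟩
  · exact Or.inr ⟨by linarith, by linarith⟩

def solBoxBdryCover (R x₀ x₁ y₀ y₁ t₀ t₁ : ℝ) : Set (ℝ × ℝ × ℝ) :=
  let w := R * exp (R / 2)
  let X := Icc (x₀ - w * exp (t₁ + R)) (x₁ + w * exp (t₁ + R))
  let Y := Icc (y₀ - w * exp (-(t₀ - R))) (y₁ + w * exp (-(t₀ - R)))
  X ×ˢ Y ×ˢ (closedBall t₀ R ∪ closedBall t₁ R) ∪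
    (solXWedge x₀ w (t₁ + R) Y ∪ solXWedge x₁ w (t₁ + R) Y) ∪
    X ×ˢ (solYWedge y₀ w (t₀ - R) ∪ solYWedge y₁ w (t₀ - R))

theorem solBdry_Ico_prod_subset_solBoxBdryCover (R x₀ x₁ y₀ y₁ t₀ t₁ : ℝ) :
    solBdry R (Ico x₀ x₁ ×ˢ Ico y₀ y₁ ×ˢ Ico t₀ t₁) ⊆ solBoxBdryCover R x₀ x₁ y₀ y₁ t₀ t₁ := by
  rintro ⟨x, y, t⟩ ⟨⟨⟨u, v, τ⟩, ⟨hu, hv, hτ⟩, hd⟩, ⟨u', v', τ'⟩, hout, hd'⟩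
  have htτ := abs_t_sub_le_of_solQDist_le hd
  have htτ' := abs_t_sub_le_of_solQDist_le hd'
  have hxu := abs_x_sub_le_of_solQDist_le hd
  have hxu' := abs_x_sub_le_of_solQDist_le hd'
  have hyv := abs_y_sub_le_of_solQDist_le hd
  have hyv' := abs_y_sub_le_of_solQDist_le hd'
  dsimp only at htτ htτ' hxu hxu' hyv hyv'
  have hR : 0 ≤ R := (abs_nonneg _).trans htτ
  have ht : t ∈ Icc (t₀ - R) (t₁ + R) := by
    rw [abs_le] at htτ; rw [mem_Ico] at hτ; constructor <;> linarith
  have hX : x ∈ Icc (x₀ - R * exp (R / 2) * exp (t₁ + R))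
      (x₁ + R * exp (R / 2) * exp (t₁ + R)) := by
    have : R * exp (R / 2) * exp t ≤ R * exp (R / 2) * exp (t₁ + R) := by gcongr; exact ht.2
    rw [abs_le] at hxu; rw [mem_Ico] at hu; constructor <;> linarith
  have hY : y ∈ Icc (y₀ - R * exp (R / 2) * exp (-(t₀ - R)))
      (y₁ + R * exp (R / 2) * exp (-(t₀ - R))) := by
    have : R * exp (R / 2) * exp (-t) ≤ R * exp (R / 2) * exp (-(t₀ - R)) := by
      gcongr; linarith [ht.1]
    rw [abs_le] at hyv; rw [mem_Ico] at hv; constructor <;> linarith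
  simp only [solBoxBdryCover, solXWedge, solYWedge, mem_union, mem_prod]
  by_cases hu' : u' ∈ Ico x₀ x₁
  · by_cases hv' : v' ∈ Ico y₀ y₁
    · have hτ' : τ' ∉ Ico t₀ t₁ := fun hτ' => hout ⟨hu', hv', hτ'⟩
      exact Or.inl (Or.inl ⟨hX, hY,
        mem_closedBall_or_mem_closedBall_of_mem_Ico_of_notMem hτ hτ' htτ htτ'⟩)
    · exact Or.inr ⟨hX, (mem_closedBall_or_mem_closedBall_of_mem_Ico_of_notMem hv hv' hyv
        hyv').imp (fun h => ⟨ht.1, h⟩) (fun h => ⟨ht.1, h⟩)⟩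
  · exact Or.inl (Or.inr ((mem_closedBall_or_mem_closedBall_of_mem_Ico_of_notMem hu hu' hxu
      hxu').imp (fun h => ⟨⟨hY, ht.2⟩, h⟩) (fun h => ⟨⟨hY, ht.2⟩, h⟩)))

noncomputable def solBdryConst (a b R : ℝ) : ℝ :=
  let K := R * exp (R / 2) * exp R
  4 * R * (a + 2 * K) * (b + 2 * K) + 4 * K * (b + 2 * K) + 4 * K * (a + 2 * K)

theorem volume_solBdry_solBox_le {a b R r s : ℝ} (ha : 0 ≤ a) (hb : 0 ≤ b) (hR : 0 ≤ R)
    (hr : 0 < r) (hs : 0 < s) :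
    volume (solBdry R (solBox a b r s)) ≤ ENNReal.ofReal (solBdryConst a b R * (r * s)) := by
  set K := R * exp (R / 2) * exp R
  have hK : 0 ≤ K := by positivity
  have hw : 0 ≤ R * exp (R / 2) := by positivity
  have hx : R * exp (R / 2) * exp (log r + R) = K * r := by rw [exp_add, exp_log hr]; ring
  have hy : R * exp (R / 2) * exp (-(-log s - R)) = K * s := by
    rw [neg_sub, sub_neg_eq_add, exp_add, exp_log hs]; ring
  rw [solBox]
  grw [solBdry_Ico_prod_subset_solBoxBdryCover R 0 (a * r) 0 (b * s) (-log s) (log r)]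
  simp only [solBoxBdryCover, hx, hy]
  grw [measure_union_le, measure_union_le, measure_union_le]
  rw [volume_prod_prod, volume_prod_prod, volume_prod_prod]
  grw [measure_union_le (closedBall _ _), measure_union_le (solYWedge _ _ _)]
  rw [volume_solXWedge _ _ hw measurableSet_Icc, volume_solXWedge _ _ hw measurableSet_Icc,
    volume_solYWedge _ _ hw, volume_solYWedge _ _ hw, ← mul_assoc, hx, hy,
    Real.volume_closedBall, Real.volume_closedBall, Real.volume_Icc, Real.volume_Icc]
  simp (disch := positivity) only [zero_sub, sub_neg_eq_add, ← ENNReal.ofReal_mul,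
    ← ENNReal.ofReal_add]
  refine ENNReal.ofReal_le_ofReal (le_of_eq ?_)
  simp only [solBdryConst]
  ring

theorem volume_solBox {a b r s : ℝ} (ha : 0 ≤ a) (hb : 0 ≤ b) (hr : 0 < r) (hs : 0 < s) :
    volume (solBox a b r s) = ENNReal.ofReal (a * b * (r * s) * log (r * s)) := by
  rw [solBox, volume_prod_prod, volume_prod_prod, Real.volume_Ico, Real.volume_Ico,
    Real.volume_Ico, sub_zero, sub_zero, sub_neg_eq_add, ← ENNReal.ofReal_mul (by positivity),
    ← ENNReal.ofReal_mul (by positivity), log_mul hr.ne' hs.ne']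
  congr 1
  ring

theorem sol_box_volume_and_boundary (a b R : ℝ) (ha : 0 < a) (hb : 0 < b) (hR : 0 < R) :
    (∀ r s : ℝ, 0 < r → 0 < s → 1 < r * s →
      volume (solBox a b r s) = ENNReal.ofReal (a * b * (r * s) * Real.log (r * s))) ∧
    ∃ C : ℝ, 0 < C ∧ ∀ r s : ℝ, 0 < r → 0 < s → Real.exp 1 ≤ r * s →
      volume (solBdry R (solBox a b r s)) ≤ ENNReal.ofReal (C * (r * s)) := by
  refine ⟨fun r s hr hs _ => volume_solBox ha.le hb.le hr hs, solBdryConst a b R, ?_,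
    fun r s hr hs _ => volume_solBdry_solBox_le ha.le hb.le hR.le hr hs⟩
  simp only [solBdryConst]
  positivity
end

section
/- Fix n ≥ 1, a₁,…,a_n > 0 and t > 0 such that e^{a_i t} is an even positive integer for every i (even-scaling). Set S_t := [0,e^{a₁t}) × ⋯ × [0,e^{a_n t}) × [0,1) × [0,t)ⁿ ⊆ ℝ^{n+1} × ℝⁿ and S_{2t} := [0,e^{2a₁t}) × ⋯ × [0,e^{2a_n t}) × [0,1) × [0,2t)ⁿ. Then there exists a finite set T ⊆ G_φ, all of whose elements have second component in {0,t}ⁿ, such that: (i) the translates g·S_t (g ∈ T, translation by G_φ multiplication) are pairwise disjoint with union S_{2t}; (ii) #T = 2ⁿ·e^{t(a₁+⋯+a_n)}; (iii) for each τ ∈ {0,t}ⁿ, exactly e^{t(a₁+⋯+a_n)} elements of T have second component τ (so exactly half of the translates have second component with first coordinate t); (iv) for each g ∈ T whose second component has first coordinate 0, the projection of g·S_t to the first coordinate is [k·e^{a₁t}, (k+1)·e^{a₁t}) for some integer k ≥ 0, and exactly half of these elements have k even. -/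
/-!
STATEMENT 12: tiling of S_{2t} by 2ⁿ·e^{t(a₁+⋯+a_n)} translates of S_t in the even-scaling
boundary one-dimensional abelian-by-abelian group G_φ = ℝ^{n+1} ⋊_φ ℝⁿ.
-/

/-- The roots α_j(s) = a_j s_j (j ≤ n) and α_{n+1}(s) = −∑ a_i s_i. -/
noncomputable def root {n : ℕ} (a : Fin n → ℝ) (s : Fin n → ℝ) (j : Fin (n + 1)) : ℝ :=
  if h : (j : ℕ) < n then a ⟨j, h⟩ * s ⟨j, h⟩ else -(∑ i, a i * s i)

/-- The multiplication of G_φ on ℝ^{n+1} × ℝⁿ: (x,s)·(x',s') = (x + φ(s)x', s+s'). -/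
noncomputable def gMul {n : ℕ} (a : Fin n → ℝ)
    (g h : (Fin (n + 1) → ℝ) × (Fin n → ℝ)) : (Fin (n + 1) → ℝ) × (Fin n → ℝ) :=
  (fun j => g.1 j + Real.exp (root a g.2 j) * h.1 j, g.2 + h.2)

/-- The Følner box S_t = [0,e^{a₁t}) × ⋯ × [0,e^{a_n t}) × [0,1) × [0,t)ⁿ. -/
noncomputable def Sbox {n : ℕ} (a : Fin n → ℝ) (t : ℝ) :
    Set ((Fin (n + 1) → ℝ) × (Fin n → ℝ)) :=
  {p | (∀ j : Fin (n + 1),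
          0 ≤ p.1 j ∧ p.1 j < (if h : (j : ℕ) < n then Real.exp (a ⟨j, h⟩ * t) else 1)) ∧
       ∀ i : Fin n, 0 ≤ p.2 i ∧ p.2 i < t}

/-!
Put `M_i = e^{a_i t}`. The translate of `S_t` by `(x, s)` with `s ∈ {0,t}ⁿ` is again a box: its side
along coordinate `i ≤ n` is `M_i` if `s_i = 0` and `M_i²` if `s_i = t`, and its last side is
`1 / ∏_{s_i = t} M_i`. So, for fixed `s`, the box `S_{2t}` (sides `M_i²`, last side `1`) is tiled by
cutting each coordinate with `s_i = 0` into `M_i` intervals and the last one into `∏_{s_i = t} M_i`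
intervals: `∏_i M_i` tiles for each of the `2ⁿ` values of `s`. The tiles with `s_1 = 0` are
indexed by a digit `k < M_1` in the first coordinate, and half of these digits are even since `M_1`
is even.
-/

open Set Function Real

lemma inv_mul_sub_mem_Ico_iff {c g x L : ℝ} (hc : 0 < c) :
    c⁻¹ * (x - g) ∈ Ico 0 L ↔ x ∈ Ico g (g + c * L) := by
  rw [mem_Ico, mem_Ico, ← div_eq_inv_mul, le_div_iff₀ hc, div_lt_iff₀ hc, zero_mul, sub_nonneg]
  constructor <;> rintro ⟨h₁, h₂⟩ <;> exact ⟨h₁, by linarith⟩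

lemma nat_floor_div_eq_iff {c u : ℝ} (hc : 0 < c) (hu : 0 ≤ u) {k : ℕ} :
    ⌊u / c⌋₊ = k ↔ u ∈ Ico ((k : ℝ) * c) (((k : ℝ) + 1) * c) := by
  rw [Nat.floor_eq_iff (div_nonneg hu hc.le), le_div_iff₀ hc, div_lt_iff₀ hc, mem_Ico]

lemma eq_of_mem_Ico_mul {c u : ℝ} (hc : 0 < c) {k l : ℕ}
    (hk : u ∈ Ico ((k : ℝ) * c) (((k : ℝ) + 1) * c))
    (hl : u ∈ Ico ((l : ℝ) * c) (((l : ℝ) + 1) * c)) : k = l := by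
  have hu : 0 ≤ u := le_trans (by positivity) hk.1
  rw [← nat_floor_div_eq_iff hc hu] at hk hl
  exact hk.symm.trans hl

lemma even_finRotate_iff {m : ℕ} (hm : Even m) (k : Fin m) :
    Even (finRotate m k : ℕ) ↔ ¬Even (k : ℕ) := by
  obtain _ | m := m
  · exact k.elim0
  rw [coe_finRotate]
  split_ifs with h
  · simpa [h, Nat.even_add_one] using hm
  · simp [Nat.even_add_one]

lemma ncard_sep_range {α β : Type*} {f : α → β} (hf : Injective f) (P : β → Prop) :
    {g ∈ range f | P g}.ncard = {x | P (f x)}.ncard := by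
  rw [← ncard_image_of_injective _ hf]
  congr 1
  ext g
  constructor
  · rintro ⟨⟨x, rfl⟩, hx⟩
    exact ⟨x, hx, rfl⟩
  · rintro ⟨x, hx, rfl⟩
    exact ⟨⟨x, rfl⟩, hx⟩

namespace HigherRankTiling

variable {n : ℕ} {a : Fin n → ℝ} {t : ℝ}

noncomputable def sboxSide (a : Fin n → ℝ) (t : ℝ) (j : Fin (n + 1)) : ℝ :=
  if h : (j : ℕ) < n then exp (a ⟨j, h⟩ * t) else 1

lemma sboxSide_pos (j : Fin (n + 1)) : 0 < sboxSide a t j := by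
  unfold sboxSide
  split
  exacts [exp_pos _, one_pos]

lemma sboxSide_castSucc (i : Fin n) : sboxSide a t i.castSucc = exp (a i * t) :=
  dif_pos i.isLt

lemma sboxSide_last : sboxSide a t (Fin.last n) = 1 :=
  dif_neg (lt_irrefl n)

lemma root_castSucc (s : Fin n → ℝ) (i : Fin n) : root a s i.castSucc = a i * s i :=
  dif_pos i.isLt

lemma root_last (s : Fin n → ℝ) : root a s (Fin.last n) = -∑ i, a i * s i :=
  dif_neg (lt_irrefl n)

lemma mem_Sbox {p : (Fin (n + 1) → ℝ) × (Fin n → ℝ)} :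
    p ∈ Sbox a t ↔ (∀ j, p.1 j ∈ Ico 0 (sboxSide a t j)) ∧ ∀ i, p.2 i ∈ Ico 0 t :=
  Iff.rfl

lemma mem_gMul_image_Sbox (g p : (Fin (n + 1) → ℝ) × (Fin n → ℝ)) :
    p ∈ gMul a g '' Sbox a t ↔
      (∀ j, p.1 j ∈ Ico (g.1 j) (g.1 j + exp (root a g.2 j) * sboxSide a t j)) ∧
        ∀ i, p.2 i ∈ Ico (g.2 i) (g.2 i + t) := by
  let gMulInv : (Fin (n + 1) → ℝ) × (Fin n → ℝ) → (Fin (n + 1) → ℝ) × (Fin n → ℝ) :=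
    fun q => (fun j => (exp (root a g.2 j))⁻¹ * (q.1 j - g.1 j), q.2 - g.2)
  have hleft : LeftInverse gMulInv (gMul a g) := fun q => by
    ext j <;> simp [gMulInv, gMul, (exp_pos _).ne']
  have hright : RightInverse gMulInv (gMul a g) := fun q => by
    ext j <;> simp [gMulInv, gMul, (exp_pos _).ne']
  rw [image_eq_preimage_of_inverse hleft hright, mem_preimage, mem_Sbox]
  refine and_congr (forall_congr' fun j => inv_mul_sub_mem_Ico_iff (exp_pos _))
    (forall_congr' fun i => ?_)
  show p.2 i - g.2 i ∈ Ico 0 t ↔ _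
  rw [mem_Ico, mem_Ico, sub_nonneg, sub_lt_iff_lt_add']

lemma image_eval_gMul_image_Sbox (ht : 0 < t) (g : (Fin (n + 1) → ℝ) × (Fin n → ℝ))
    (j : Fin (n + 1)) :
    (fun p => p.1 j) '' (gMul a g '' Sbox a t) =
      Ico (g.1 j) (g.1 j + exp (root a g.2 j) * sboxSide a t j) := by
  ext v
  constructor
  · rintro ⟨p, hp, rfl⟩
    exact ((mem_gMul_image_Sbox g p).1 hp).1 j
  · intro hv
    refine ⟨(update g.1 j v, g.2), (mem_gMul_image_Sbox _ _).2 ⟨fun k => ?_, fun i => ?_⟩,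
      update_self j v g.1⟩
    · rcases eq_or_ne k j with rfl | hk
      · simpa using hv
      · simpa [update_of_ne hk] using mul_pos (exp_pos (root a g.2 k)) (sboxSide_pos k)
    · simpa using ht

lemma eq_decide_of_mem_Ico {b : Bool} {s : ℝ}
    (h : s ∈ Ico (if b then t else 0) ((if b then t else 0) + t)) : b = decide (t ≤ s) := by
  cases b <;> simp only [mem_Ico, Bool.false_eq_true, if_true, if_false, zero_add] at h
  · simpa using h.2
  · simpa using h.1

def prodTrue (M : Fin n → ℕ) (b : Fin n → Bool) : ℕ :=
  ∏ i with b i, M i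

lemma card_digits (M : Fin n → ℕ) (b : Fin n → Bool) :
    Fintype.card ((i : {i // b i}) → Fin (M i)) = prodTrue M b := by
  simp only [Fintype.card_pi, Fintype.card_fin, prodTrue]
  exact (Finset.prod_subtype _ (by simp) _).symm

noncomputable def digitsEquiv (M : Fin n → ℕ) (b : Fin n → Bool) :
    ((i : {i // b i}) → Fin (M i)) ≃ Fin (prodTrue M b) :=
  Fintype.equivFinOfCardEq (card_digits M b)

/-- In an index `(r, b)`, the flags `b` record which `s_i` equal `t`. Where `b i` is false, the
digit `r i` places the tile along coordinate `i`; the digits with `b i` true are packed, as one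
mixed-radix number, into the position of the tile along the last coordinate. -/
abbrev TileIndex (M : Fin n → ℕ) := ((i : Fin n) → Fin (M i)) × (Fin n → Bool)

noncomputable def lastDigit (M : Fin n → ℕ) (x : TileIndex M) : Fin (prodTrue M x.2) :=
  digitsEquiv M x.2 fun i => x.1 i

noncomputable def tile (M : Fin n → ℕ) (t : ℝ) (x : TileIndex M) :
    (Fin (n + 1) → ℝ) × (Fin n → ℝ) :=
  (Fin.snoc (fun i => if x.2 i then 0 else (x.1 i : ℝ) * M i)
      (((lastDigit M x : ℕ) : ℝ) * (prodTrue M x.2 : ℝ)⁻¹),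
    fun i => if x.2 i then t else 0)

noncomputable def tiles (M : Fin n → ℕ) (t : ℝ) : Finset ((Fin (n + 1) → ℝ) × (Fin n → ℝ)) :=
  Finset.univ.image (tile M t)

section

variable {M : Fin n → ℕ}

lemma coe_tiles : (tiles M t : Set ((Fin (n + 1) → ℝ) × (Fin n → ℝ))) = range (tile M t) := by
  simp [tiles]

lemma tile_fst_castSucc (x : TileIndex M) (i : Fin n) :
    (tile M t x).1 i.castSucc = if x.2 i then 0 else (x.1 i : ℝ) * M i := by
  simp [tile]

lemma tile_fst_last (x : TileIndex M) :
    (tile M t x).1 (Fin.last n) = ((lastDigit M x : ℕ) : ℝ) * (prodTrue M x.2 : ℝ)⁻¹ := by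
  simp [tile]

lemma tile_snd_eq_zero_iff (ht : 0 < t) (x : TileIndex M) (i : Fin n) :
    (tile M t x).2 i = 0 ↔ x.2 i = false := by
  cases h : x.2 i <;> simp [tile, h, ht.ne']

lemma tiles_snd (g : (Fin (n + 1) → ℝ) × (Fin n → ℝ)) (hg : g ∈ tiles M t) (i : Fin n) :
    g.2 i = 0 ∨ g.2 i = t := by
  obtain ⟨x, -, rfl⟩ := Finset.mem_image.1 hg
  by_cases h : x.2 i <;> simp [tile, h]

lemma pos_of_cast_eq_exp (hM : ∀ i, (M i : ℝ) = exp (a i * t)) (i : Fin n) : 0 < M i := by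
  exact_mod_cast (hM i).symm ▸ exp_pos (a i * t)

lemma prodTrue_pos (hM : ∀ i, (M i : ℝ) = exp (a i * t)) (b : Fin n → Bool) :
    0 < prodTrue M b :=
  Finset.prod_pos fun i _ => pos_of_cast_eq_exp hM i

lemma sboxSide_two_mul_castSucc (hM : ∀ i, (M i : ℝ) = exp (a i * t)) (i : Fin n) :
    sboxSide a (2 * t) i.castSucc = (M i : ℝ) * M i := by
  rw [sboxSide_castSucc, show a i * (2 * t) = a i * t + a i * t by ring, exp_add, hM]

lemma exp_root_tile_castSucc (hM : ∀ i, (M i : ℝ) = exp (a i * t)) (x : TileIndex M)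
    (i : Fin n) : exp (root a (tile M t x).2 i.castSucc) = if x.2 i then (M i : ℝ) else 1 := by
  rw [root_castSucc, hM]
  by_cases h : x.2 i <;> simp [tile, h]

lemma exp_root_tile_last (hM : ∀ i, (M i : ℝ) = exp (a i * t)) (x : TileIndex M) :
    exp (root a (tile M t x).2 (Fin.last n)) = (prodTrue M x.2 : ℝ)⁻¹ := by
  rw [root_last, exp_neg, exp_sum, prodTrue, Nat.cast_prod, Finset.prod_filter]
  refine congrArg _ (Finset.prod_congr rfl fun i _ => ?_)
  by_cases h : x.2 i <;> simp [tile, h, hM]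

lemma cast_prod_eq_exp (hM : ∀ i, (M i : ℝ) = exp (a i * t)) :
    ((∏ i, M i : ℕ) : ℝ) = exp (t * ∑ i, a i) := by
  rw [Nat.cast_prod, Finset.mul_sum, exp_sum]
  simp only [hM, mul_comm t]

lemma mem_tile_iff (hM : ∀ i, (M i : ℝ) = exp (a i * t)) (x : TileIndex M)
    (p : (Fin (n + 1) → ℝ) × (Fin n → ℝ)) :
    p ∈ gMul a (tile M t x) '' Sbox a t ↔
      (∀ i, p.1 i.castSucc ∈ if x.2 i then Ico 0 ((M i : ℝ) * M i)
        else Ico ((x.1 i : ℝ) * M i) (((x.1 i : ℝ) + 1) * M i)) ∧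
      p.1 (Fin.last n) ∈ Ico (((lastDigit M x : ℕ) : ℝ) * (prodTrue M x.2 : ℝ)⁻¹)
        ((((lastDigit M x : ℕ) : ℝ) + 1) * (prodTrue M x.2 : ℝ)⁻¹) ∧
      ∀ i, p.2 i ∈ Ico (if x.2 i then t else 0) ((if x.2 i then t else 0) + t) := by
  rw [mem_gMul_image_Sbox, Fin.forall_fin_succ', and_assoc]
  refine and_congr (forall_congr' fun i => ?_) (and_congr ?_ Iff.rfl)
  · rw [tile_fst_castSucc, exp_root_tile_castSucc hM, sboxSide_castSucc, ← hM]
    cases x.2 i <;> simp [add_one_mul]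
  · rw [tile_fst_last, exp_root_tile_last hM, sboxSide_last, mul_one, add_one_mul]

lemma eq_of_mem_tile_of_mem_tile (hM : ∀ i, (M i : ℝ) = exp (a i * t))
    {x y : TileIndex M} {p : (Fin (n + 1) → ℝ) × (Fin n → ℝ)}
    (hx : p ∈ gMul a (tile M t x) '' Sbox a t) (hy : p ∈ gMul a (tile M t y) '' Sbox a t) :
    x = y := by
  rw [mem_tile_iff hM] at hx hy
  obtain ⟨r, b⟩ := x
  obtain ⟨r', b'⟩ := y
  obtain rfl : b = b' := funext fun i =>
    (eq_decide_of_mem_Ico (hx.2.2 i)).trans (eq_decide_of_mem_Ico (hy.2.2 i)).symm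
  have hP : (0 : ℝ) < (prodTrue M b : ℝ)⁻¹ := inv_pos.2 (Nat.cast_pos.2 (prodTrue_pos hM b))
  have hdigits : (fun i : {i // b i} => r i) = fun i : {i // b i} => r' i :=
    (digitsEquiv M b).injective (Fin.ext (eq_of_mem_Ico_mul hP hx.2.1 hy.2.1))
  refine Prod.ext (funext fun i => ?_) rfl
  by_cases hb : b i
  · exact congrFun hdigits ⟨i, hb⟩
  · have hxi := hx.1 i
    have hyi := hy.1 i
    rw [if_neg hb] at hxi hyi
    exact Fin.ext (eq_of_mem_Ico_mul (Nat.cast_pos.2 (pos_of_cast_eq_exp hM i)) hxi hyi)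

lemma tile_subset_Sbox (hM : ∀ i, (M i : ℝ) = exp (a i * t)) (ht : 0 < t) (x : TileIndex M) :
    gMul a (tile M t x) '' Sbox a t ⊆ Sbox a (2 * t) := by
  intro p hp
  obtain ⟨hcoord, hlast, hs⟩ := (mem_tile_iff hM x p).1 hp
  have hP : (0 : ℝ) < prodTrue M x.2 := Nat.cast_pos.2 (prodTrue_pos hM x.2)
  rw [mem_Sbox, Fin.forall_fin_succ', sboxSide_last]
  refine ⟨⟨fun i => ?_, ?_⟩, fun i => ?_⟩
  · rw [sboxSide_two_mul_castSucc hM]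
    have hr : (x.1 i : ℝ) + 1 ≤ M i := by exact_mod_cast (x.1 i).isLt
    by_cases hb : x.2 i
    · simpa [hb] using hcoord i
    · have hi := hcoord i
      rw [if_neg hb] at hi
      exact ⟨le_trans (by positivity) hi.1,
        hi.2.trans_le (mul_le_mul_of_nonneg_right hr (Nat.cast_nonneg _))⟩
  · have hm : ((lastDigit M x : ℕ) : ℝ) + 1 ≤ prodTrue M x.2 := by
      exact_mod_cast (lastDigit M x).isLt
    refine ⟨le_trans (by positivity) hlast.1, hlast.2.trans_le ?_⟩
    rwa [← div_eq_mul_inv, div_le_one hP]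
  · have hi := hs i
    by_cases hb : x.2 i <;> simp only [hb, if_true, if_false, Bool.false_eq_true] at hi <;>
      exact ⟨by linarith [hi.1], by linarith [hi.2]⟩

lemma exists_mem_tile (hM : ∀ i, (M i : ℝ) = exp (a i * t)) {p : (Fin (n + 1) → ℝ) × (Fin n → ℝ)}
    (hp : p ∈ Sbox a (2 * t)) : ∃ x : TileIndex M, p ∈ gMul a (tile M t x) '' Sbox a t := by
  rw [mem_Sbox, Fin.forall_fin_succ', sboxSide_last] at hp
  obtain ⟨⟨hcoord, hlast⟩, hs⟩ := hp
  let b : Fin n → Bool := fun i => decide (t ≤ p.2 i)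
  have hP : (0 : ℝ) < (prodTrue M b : ℝ)⁻¹ := inv_pos.2 (Nat.cast_pos.2 (prodTrue_pos hM b))
  have hM' (i : Fin n) : (0 : ℝ) < M i := Nat.cast_pos.2 (pos_of_cast_eq_exp hM i)
  have hm : ⌊p.1 (Fin.last n) / (prodTrue M b : ℝ)⁻¹⌋₊ < prodTrue M b := by
    rw [Nat.floor_lt (div_nonneg hlast.1 hP.le), div_inv_eq_mul]
    simpa using mul_lt_mul_of_pos_right hlast.2 (inv_pos.1 hP)
  have hr (i : Fin n) : ⌊p.1 i.castSucc / M i⌋₊ < M i := by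
    have hi := hcoord i
    rw [sboxSide_two_mul_castSucc hM] at hi
    rw [Nat.floor_lt (div_nonneg hi.1 (hM' i).le), div_lt_iff₀ (hM' i)]
    exact hi.2
  let r : (i : Fin n) → Fin (M i) := fun i =>
    if h : b i then (digitsEquiv M b).symm ⟨_, hm⟩ ⟨i, h⟩ else ⟨_, hr i⟩
  have hlastDigit : lastDigit M (r, b) = ⟨_, hm⟩ := by
    rw [lastDigit, ← Equiv.eq_symm_apply]
    funext i
    exact dif_pos i.2
  refine ⟨(r, b), (mem_tile_iff hM _ _).2 ⟨fun i => ?_, ?_, fun i => ?_⟩⟩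
  · by_cases hb : b i
    · rw [if_pos hb, ← sboxSide_two_mul_castSucc hM]
      exact hcoord i
    · rw [if_neg hb]
      simp only [r, dif_neg hb]
      exact (nat_floor_div_eq_iff (hM' i) (hcoord i).1).1 rfl
  · rw [hlastDigit]
    exact (nat_floor_div_eq_iff hP hlast.1).1 rfl
  · by_cases hb : t ≤ p.2 i
    · simpa [b, hb] using (hs i).2.trans_eq (two_mul t)
    · simpa [b, hb] using And.intro (hs i).1 (not_le.1 hb)

lemma tile_injective (hM : ∀ i, (M i : ℝ) = exp (a i * t)) (ht : 0 < t) :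
    Injective (tile M t) := by
  intro x y hxy
  have h0 : (0 : (Fin (n + 1) → ℝ) × (Fin n → ℝ)) ∈ Sbox a t :=
    mem_Sbox.2 ⟨fun j => ⟨le_rfl, sboxSide_pos j⟩, fun _ => ⟨le_rfl, ht⟩⟩
  refine eq_of_mem_tile_of_mem_tile hM (mem_image_of_mem _ h0) ?_
  rw [hxy]
  exact mem_image_of_mem _ h0

lemma image_eval_castSucc_tile (hM : ∀ i, (M i : ℝ) = exp (a i * t)) (ht : 0 < t)
    {x : TileIndex M} {i : Fin n} (hb : x.2 i = false) :
    (fun p => p.1 i.castSucc) '' (gMul a (tile M t x) '' Sbox a t) =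
      Ico ((x.1 i : ℝ) * exp (a i * t)) (((x.1 i : ℝ) + 1) * exp (a i * t)) := by
  rw [image_eval_gMul_image_Sbox ht, tile_fst_castSucc, exp_root_tile_castSucc hM,
    sboxSide_castSucc, ← hM]
  simp [hb, add_one_mul]

lemma ncard_setOf_snd_eq (b : Fin n → Bool) : {x : TileIndex M | x.2 = b}.ncard = ∏ i, M i := by
  have hrange : {x : TileIndex M | x.2 = b} = range fun r => (r, b) := by
    ext ⟨r, b'⟩
    simp [eq_comm]
  rw [hrange, ncard_range_of_injective fun r r' h => (Prod.ext_iff.1 h).1,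
    Nat.card_eq_fintype_card, Fintype.card_pi]
  simp

/-- Rotating the `i`-th digit swaps its parity, because `M i` is even. -/
lemma two_mul_ncard_setOf_even (i : Fin n) (hM : Even (M i)) :
    2 * {x : TileIndex M | x.2 i = false ∧ Even (x.1 i : ℕ)}.ncard =
      {x : TileIndex M | x.2 i = false}.ncard := by
  let σ : TileIndex M ≃ TileIndex M :=
    (Equiv.piCongrRight fun j => if j = i then finRotate (M j) else Equiv.refl _).prodCongr
      (Equiv.refl _)
  have hσ (x : TileIndex M) : Even ((σ x).1 i : ℕ) ↔ ¬Even (x.1 i : ℕ) := by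
    simpa [σ] using even_finRotate_iff hM (x.1 i)
  set S := {x : TileIndex M | x.2 i = false}
  set E := {x : TileIndex M | Even (x.1 i : ℕ)}
  have hswap : (S ∩ E).ncard = (S \ E).ncard := by
    refine le_antisymm (ncard_le_ncard_of_injOn σ ?_ σ.injective.injOn)
      (ncard_le_ncard_of_injOn σ ?_ σ.injective.injOn)
    · rintro x ⟨hS, hE⟩
      exact ⟨hS, fun h => (hσ x).1 h hE⟩
    · rintro x ⟨hS, hE⟩
      exact ⟨hS, (hσ x).2 hE⟩
  change 2 * (S ∩ E).ncard = S.ncard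
  rw [← ncard_inter_add_ncard_sdiff_eq_ncard S E, ← hswap, two_mul]

lemma pairwiseDisjoint_tiles (hM : ∀ i, (M i : ℝ) = exp (a i * t)) :
    (tiles M t : Set ((Fin (n + 1) → ℝ) × (Fin n → ℝ))).PairwiseDisjoint
      fun g => gMul a g '' Sbox a t := by
  rw [coe_tiles]
  rintro _ ⟨x, rfl⟩ _ ⟨y, rfl⟩ hne
  exact disjoint_left.2 fun p hx hy => hne (congrArg _ (eq_of_mem_tile_of_mem_tile hM hx hy))

lemma biUnion_tiles (hM : ∀ i, (M i : ℝ) = exp (a i * t)) (ht : 0 < t) :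
    ⋃ g ∈ tiles M t, gMul a g '' Sbox a t = Sbox a (2 * t) := by
  refine subset_antisymm (iUnion₂_subset fun g hg => ?_) fun p hp => ?_
  · obtain ⟨x, -, rfl⟩ := Finset.mem_image.1 hg
    exact tile_subset_Sbox hM ht x
  · obtain ⟨x, hx⟩ := exists_mem_tile hM hp
    exact mem_iUnion₂.2 ⟨_, Finset.mem_image_of_mem _ (Finset.mem_univ x), hx⟩

lemma card_tiles (hM : ∀ i, (M i : ℝ) = exp (a i * t)) (ht : 0 < t) :
    ((tiles M t).card : ℝ) = 2 ^ n * exp (t * ∑ i, a i) := by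
  rw [tiles, Finset.card_image_of_injective _ (tile_injective hM ht), Finset.card_univ,
    Fintype.card_prod, Fintype.card_pi, Nat.cast_mul, ← cast_prod_eq_exp hM]
  simp [mul_comm]

lemma ncard_tiles_snd_eq (hM : ∀ i, (M i : ℝ) = exp (a i * t)) (ht : 0 < t)
    (τ : Fin n → ℝ) (hτ : ∀ i, τ i = 0 ∨ τ i = t) :
    ({g ∈ (tiles M t : Set ((Fin (n + 1) → ℝ) × (Fin n → ℝ))) | g.2 = τ}.ncard : ℝ) =
      exp (t * ∑ i, a i) := by
  have hfiber :
      {x | (tile M t x).2 = τ} = {x : TileIndex M | x.2 = fun i => decide (τ i = t)} := by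
    ext x
    change (tile M t x).2 = τ ↔ x.2 = _
    simp only [funext_iff]
    refine forall_congr' fun i => ?_
    rcases hτ i with h | h <;> by_cases hx : x.2 i <;> simp [tile, hx, h, ht.ne, ht.ne']
  rw [coe_tiles, ncard_sep_range (tile_injective hM ht), hfiber, ncard_setOf_snd_eq,
    cast_prod_eq_exp hM]

lemma exists_image_eval_tiles (hM : ∀ i, (M i : ℝ) = exp (a i * t)) (ht : 0 < t) (i : Fin n)
    (g : (Fin (n + 1) → ℝ) × (Fin n → ℝ)) (hg : g ∈ tiles M t) (hg0 : g.2 i = 0) :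
    ∃ k : ℕ, (fun p => p.1 i.castSucc) '' (gMul a g '' Sbox a t) =
      Ico ((k : ℝ) * exp (a i * t)) (((k : ℝ) + 1) * exp (a i * t)) := by
  obtain ⟨x, -, rfl⟩ := Finset.mem_image.1 hg
  exact ⟨x.1 i, image_eval_castSucc_tile hM ht ((tile_snd_eq_zero_iff ht x i).1 hg0)⟩

lemma two_mul_ncard_tiles_even (hM : ∀ i, (M i : ℝ) = exp (a i * t)) (ht : 0 < t) (i : Fin n)
    (hMi : Even (M i)) :
    2 * {g ∈ (tiles M t : Set ((Fin (n + 1) → ℝ) × (Fin n → ℝ))) | g.2 i = 0 ∧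
        ∃ k : ℕ, Even k ∧ (fun p => p.1 i.castSucc) '' (gMul a g '' Sbox a t) =
          Ico ((k : ℝ) * exp (a i * t)) (((k : ℝ) + 1) * exp (a i * t))}.ncard =
      {g ∈ (tiles M t : Set ((Fin (n + 1) → ℝ) × (Fin n → ℝ))) | g.2 i = 0}.ncard := by
  have he : 0 < exp (a i * t) := exp_pos _
  rw [coe_tiles, ncard_sep_range (tile_injective hM ht), ncard_sep_range (tile_injective hM ht)]
  simp only [tile_snd_eq_zero_iff ht]
  convert two_mul_ncard_setOf_even i hMi using 3
  ext x
  refine and_congr_right fun hb => ?_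
  rw [image_eval_castSucc_tile hM ht hb]
  constructor
  · rintro ⟨k, hk, hIco⟩
    have hk' := ((Ico_eq_Ico_iff (Or.inl (by gcongr; linarith))).1 hIco).1
    rw [mul_left_inj' he.ne', Nat.cast_inj] at hk'
    rwa [hk']
  · exact fun h => ⟨_, h, rfl⟩

end

end HigherRankTiling

open HigherRankTiling

theorem higher_rank_tiling_general (n : ℕ) (hn : 0 < n) (a : Fin n → ℝ)
    (t : ℝ) (ht : 0 < t)
    -- even-scaling: each e^{a_i t} is an even positive integer
    (heven : ∀ i, ∃ N : ℕ, 0 < N ∧ Real.exp (a i * t) = 2 * N) :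
    ∃ T : Finset ((Fin (n + 1) → ℝ) × (Fin n → ℝ)),
      -- all translating elements have second component in {0,t}ⁿ
      (∀ g ∈ T, ∀ i : Fin n, g.2 i = 0 ∨ g.2 i = t) ∧
      -- (i) the translates g·S_t are pairwise disjoint with union S_{2t}
      (↑T : Set ((Fin (n + 1) → ℝ) × (Fin n → ℝ))).PairwiseDisjoint
        (fun g => gMul a g '' Sbox a t) ∧
      (⋃ g ∈ T, gMul a g '' Sbox a t) = Sbox a (2 * t) ∧
      -- (ii) #T = 2ⁿ·e^{t(a₁+⋯+a_n)}
      ((T.card : ℝ) = 2 ^ n * Real.exp (t * ∑ i, a i)) ∧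
      -- (iii) for each τ ∈ {0,t}ⁿ, exactly e^{t∑aᵢ} elements of T have second component τ
      (∀ τ : Fin n → ℝ, (∀ i, τ i = 0 ∨ τ i = t) →
        (({g ∈ (↑T : Set ((Fin (n + 1) → ℝ) × (Fin n → ℝ))) | g.2 = τ}).ncard : ℝ) =
          Real.exp (t * ∑ i, a i)) ∧
      -- (iv) translates with second component having first coordinate 0 project, in the
      -- first coordinate, onto [k e^{a₁t}, (k+1)e^{a₁t}) for some integer k ≥ 0 ...
      (∀ g ∈ T, g.2 ⟨0, hn⟩ = 0 →
        ∃ k : ℕ, (fun p => p.1 ⟨0, Nat.succ_pos n⟩) '' (gMul a g '' Sbox a t) =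
          Set.Ico ((k : ℝ) * Real.exp (a ⟨0, hn⟩ * t))
            (((k : ℝ) + 1) * Real.exp (a ⟨0, hn⟩ * t))) ∧
      -- ... and exactly half of these elements have k even
      2 * ({g ∈ (↑T : Set ((Fin (n + 1) → ℝ) × (Fin n → ℝ))) | g.2 ⟨0, hn⟩ = 0 ∧
            ∃ k : ℕ, Even k ∧
              (fun p => p.1 ⟨0, Nat.succ_pos n⟩) '' (gMul a g '' Sbox a t) =
                Set.Ico ((k : ℝ) * Real.exp (a ⟨0, hn⟩ * t))
                  (((k : ℝ) + 1) * Real.exp (a ⟨0, hn⟩ * t))}).ncard =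
        ({g ∈ (↑T : Set ((Fin (n + 1) → ℝ) × (Fin n → ℝ))) | g.2 ⟨0, hn⟩ = 0}).ncard := by
  choose N _ hN using heven
  have hM : ∀ i, ((2 * N i : ℕ) : ℝ) = exp (a i * t) := fun i => by simp [hN i]
  exact ⟨tiles _ t, tiles_snd, pairwiseDisjoint_tiles hM, biUnion_tiles hM ht, card_tiles hM ht,
    ncard_tiles_snd_eq hM ht, exists_image_eval_tiles hM ht ⟨0, hn⟩,
    two_mul_ncard_tiles_even hM ht ⟨0, hn⟩ (even_two_mul _)⟩

theorem higher_rank_tiling (n : ℕ) (hn : 0 < n) (a : Fin n → ℝ) (ha : ∀ i, 0 < a i)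
    (t : ℝ) (ht : 0 < t)
    -- even-scaling: each e^{a_i t} is an even positive integer
    (heven : ∀ i, ∃ N : ℕ, 0 < N ∧ Real.exp (a i * t) = 2 * N) :
    ∃ T : Finset ((Fin (n + 1) → ℝ) × (Fin n → ℝ)),
      -- all translating elements have second component in {0,t}ⁿ
      (∀ g ∈ T, ∀ i : Fin n, g.2 i = 0 ∨ g.2 i = t) ∧
      -- (i) the translates g·S_t are pairwise disjoint with union S_{2t}
      (↑T : Set ((Fin (n + 1) → ℝ) × (Fin n → ℝ))).PairwiseDisjoint
        (fun g => gMul a g '' Sbox a t) ∧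
      (⋃ g ∈ T, gMul a g '' Sbox a t) = Sbox a (2 * t) ∧
      -- (ii) #T = 2ⁿ·e^{t(a₁+⋯+a_n)}
      ((T.card : ℝ) = 2 ^ n * Real.exp (t * ∑ i, a i)) ∧
      -- (iii) for each τ ∈ {0,t}ⁿ, exactly e^{t∑aᵢ} elements of T have second component τ
      (∀ τ : Fin n → ℝ, (∀ i, τ i = 0 ∨ τ i = t) →
        (({g ∈ (↑T : Set ((Fin (n + 1) → ℝ) × (Fin n → ℝ))) | g.2 = τ}).ncard : ℝ) =
          Real.exp (t * ∑ i, a i)) ∧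
      -- (iv) translates with second component having first coordinate 0 project, in the
      -- first coordinate, onto [k e^{a₁t}, (k+1)e^{a₁t}) for some integer k ≥ 0 ...
      (∀ g ∈ T, g.2 ⟨0, hn⟩ = 0 →
        ∃ k : ℕ, (fun p => p.1 ⟨0, Nat.succ_pos n⟩) '' (gMul a g '' Sbox a t) =
          Set.Ico ((k : ℝ) * Real.exp (a ⟨0, hn⟩ * t))
            (((k : ℝ) + 1) * Real.exp (a ⟨0, hn⟩ * t))) ∧
      -- ... and exactly half of these elements have k even
      2 * ({g ∈ (↑T : Set ((Fin (n + 1) → ℝ) × (Fin n → ℝ))) | g.2 ⟨0, hn⟩ = 0 ∧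
            ∃ k : ℕ, Even k ∧
              (fun p => p.1 ⟨0, Nat.succ_pos n⟩) '' (gMul a g '' Sbox a t) =
                Set.Ico ((k : ℝ) * Real.exp (a ⟨0, hn⟩ * t))
                  (((k : ℝ) + 1) * Real.exp (a ⟨0, hn⟩ * t))}).ncard =
        ({g ∈ (↑T : Set ((Fin (n + 1) → ℝ) × (Fin n → ℝ))) | g.2 ⟨0, hn⟩ = 0}).ncard :=
  higher_rank_tiling_general n hn a t ht heven
end

section
/- Let m ≥ 2 be an integer, Γ_m = ℤ[1/m] ⋊ ℤ, and fix the generating set S₀ = {(1,0), (0,1)} with associated word metric d. Fix r > 0 and R > 0. For j ≥ 1 define the Følner set F_j := {(a,k) ∈ Γ_m : a ∈ ℤ, 0 ≤ a < r·m^j, 0 ≤ k < j}. Then there exists a constant C > 0 (depending only on m, r and R) such that #∂_R F_j ≤ C·m^j for all j ≥ 1, and consequently #∂_R F_j / #F_j → 0 as j → ∞, i.e. the sets F_j form a Følner sequence. -/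
/-!
STATEMENT 13: the sets F_j = {(a,k) : a ∈ ℤ, 0 ≤ a < r·m^j, 0 ≤ k < j} form a Følner
sequence in Γ_m = ℤ[1/m] ⋊ ℤ ≅ BS(1,m), with #∂_R F_j ≤ C·m^j.
-/

/-- The subring ℤ[1/m] of ℚ. -/
def Zinv (m : ℕ) : Subring ℚ := Subring.closure {((m : ℚ))⁻¹}

lemma zpow_mem_Zinv (m : ℕ) (k : ℤ) : (m : ℚ) ^ k ∈ Zinv m := by
  induction k using Int.rec with
  | ofNat n => simpa using pow_mem (natCast_mem (Zinv m) m) n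
  | negSucc n =>
      rw [zpow_negSucc, ← inv_pow]
      exact pow_mem (Subring.subset_closure (Set.mem_singleton _)) _

/-- The group Γ_m = ℤ[1/m] ⋊ ℤ, with underlying set ℤ[1/m] × ℤ and multiplication
(a,k)·(b,l) = (a + m^k b, k + l). -/
@[ext]
structure BS (m : ℕ) where
  a : Zinv m
  k : ℤ

namespace BS

variable {m : ℕ}

noncomputable def mul' (g h : BS m) : BS m :=
  ⟨g.a + ⟨(m : ℚ) ^ g.k, zpow_mem_Zinv m g.k⟩ * h.a, g.k + h.k⟩

noncomputable def inv' (g : BS m) : BS m :=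
  ⟨-(⟨(m : ℚ) ^ (-g.k), zpow_mem_Zinv m (-g.k)⟩ * g.a), -g.k⟩

noncomputable instance [NeZero m] : Group (BS m) where
  mul := mul'
  one := ⟨0, 0⟩
  inv := inv'
  mul_assoc g h c := by
    have hm : (m : ℚ) ≠ 0 := Nat.cast_ne_zero.mpr (NeZero.ne m)
    show mul' (mul' g h) c = mul' g (mul' h c)
    unfold mul'
    ext
    · show ((g.a : ℚ) + (m : ℚ) ^ g.k * (h.a : ℚ)) + (m : ℚ) ^ (g.k + h.k) * (c.a : ℚ)
        = (g.a : ℚ) + (m : ℚ) ^ g.k * ((h.a : ℚ) + (m : ℚ) ^ h.k * (c.a : ℚ))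
      rw [zpow_add₀ hm]; ring
    · exact add_assoc _ _ _
  one_mul g := by
    show mul' ⟨0, 0⟩ g = g
    unfold mul'
    ext
    · show (0 : ℚ) + (m : ℚ) ^ (0 : ℤ) * (g.a : ℚ) = (g.a : ℚ)
      simp
    · exact zero_add _
  mul_one g := by
    show mul' g ⟨0, 0⟩ = g
    unfold mul'
    ext
    · show (g.a : ℚ) + (m : ℚ) ^ g.k * (0 : ℚ) = (g.a : ℚ)
      simp
    · exact add_zero _
  inv_mul_cancel g := by
    show mul' (inv' g) g = ⟨0, 0⟩
    unfold mul' inv'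
    ext
    · show -((m : ℚ) ^ (-g.k) * (g.a : ℚ)) + (m : ℚ) ^ (-g.k) * (g.a : ℚ) = (0 : ℚ)
      ring
    · exact neg_add_cancel _

end BS

/-- The word metric associated to a generating set `S`. -/
noncomputable def wordDist {G : Type*} [Group G] (S : Set G) (g h : G) : ℕ :=
  sInf {n : ℕ | ∃ l : List G, l.length = n ∧ (∀ w ∈ l, w ∈ S ∨ w⁻¹ ∈ S) ∧ g⁻¹ * h = l.prod}

/-- The standard generating set S₀ = {(1,0), (0,1)} of Γ_m. -/
noncomputable def bsGen (m : ℕ) : Set (BS m) := {⟨1, 0⟩, ⟨0, 1⟩}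

/-- The Følner set F_j = {(a,k) ∈ Γ_m : a ∈ ℤ, 0 ≤ a < r·m^j, 0 ≤ k < j}. -/
noncomputable def bsFolner (m : ℕ) (r : ℝ) (j : ℕ) : Set (BS m) :=
  {g | (∃ z : ℤ, (g.a : ℚ) = z) ∧ 0 ≤ ((g.a : ℚ) : ℝ) ∧
    ((g.a : ℚ) : ℝ) < r * (m : ℝ) ^ j ∧ 0 ≤ g.k ∧ g.k < (j : ℤ)}

/-- The R-boundary of A ⊆ Γ_m for the word metric d of S₀. -/
noncomputable def bsBdry (m : ℕ) [NeZero m] (R : ℝ) (A : Set (BS m)) : Set (BS m) :=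
  {γ | (∃ x ∈ A, (wordDist (bsGen m) γ x : ℝ) ≤ R) ∧
       (∃ x ∉ A, (wordDist (bsGen m) γ x : ℝ) ≤ R)}

/-!
A point `γ` of `∂_R F` lies within distance `R` of some `x ∈ F` and some `y ∉ F`, so `x` is an
inner boundary point of `F` (`x * w ∉ F` for a `w = x⁻¹ * y` of word length `≤ 2R`) and `γ` is
`x` times an element of the ball `B_R`. Hence `#∂_R F ≤ #B_R · #(inner boundary)`.

An element `w = (c, e)` of word length `≤ M` has `|e| ≤ M`, `|c| ≤ M m^M` and `m^M c ∈ ℤ`. For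
`(a, k) ∈ F_j`, the product `(a, k) * w = (a + m^k c, k + e)` therefore stays in `F_j` unless `k`
is within `M` of `0` or `j`, or `a` is within `M m^M m^k` of `0` or of `r m^j`. These cells of the
grid `⌈r m^j⌉ × j` number at most `2M ⌈r m^j⌉ + 2M m^M ∑_{k<j} m^k = O(m^j)`, whereas
`#F_j = ⌈r m^j⌉ j`, so the Følner ratio is `O(1/j)`.
-/

section WordMetric

variable {G : Type*} [Group G] {S : Set G}

variable (S) in
def wordBall (n : ℕ) : Set G :=
  {g | ∃ l : List G, l.length ≤ n ∧ (∀ w ∈ l, w ∈ S ∨ w⁻¹ ∈ S) ∧ l.prod = g}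

lemma inv_mem_wordBall {n : ℕ} {g : G} (hg : g ∈ wordBall S n) : g⁻¹ ∈ wordBall S n := by
  obtain ⟨l, hlen, hl, rfl⟩ := hg
  refine ⟨(l.map (·⁻¹)).reverse, by simpa using hlen, ?_, (List.prod_inv_reverse l).symm⟩
  simp only [List.mem_reverse, List.mem_map]
  rintro _ ⟨w, hw, rfl⟩
  rw [inv_inv]
  exact (hl w hw).symm

lemma mul_mem_wordBall {n n' : ℕ} {g h : G} (hg : g ∈ wordBall S n) (hh : h ∈ wordBall S n') :
    g * h ∈ wordBall S (n + n') := by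
  obtain ⟨l, hlen, hl, rfl⟩ := hg
  obtain ⟨l', hlen', hl', rfl⟩ := hh
  refine ⟨l ++ l', by simp only [List.length_append]; omega, ?_, List.prod_append⟩
  simp only [List.mem_append]
  rintro w (hw | hw)
  exacts [hl w hw, hl' w hw]

lemma wordBall_finite (hS : S.Finite) (n : ℕ) : (wordBall S n).Finite := by
  have : Finite ↥(S ∪ S⁻¹) := (hS.union hS.inv).to_subtype
  refine ((List.finite_length_le ↥(S ∪ S⁻¹) n).image (fun l => (l.map (↑)).prod)).subset ?_
  rintro _ ⟨l, hlen, hl, rfl⟩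
  lift l to List ↥(S ∪ S⁻¹) using hl
  exact ⟨l, by simpa using hlen, rfl⟩

lemma mem_wordBall_of_wordDist_le (hS : Subgroup.closure S = ⊤) {g h : G} {n : ℕ}
    (hd : wordDist S g h ≤ n) : g⁻¹ * h ∈ wordBall S n := by
  have hmem : g⁻¹ * h ∈ Submonoid.closure (S ∪ S⁻¹) := by
    rw [← Subgroup.closure_toSubmonoid, hS]
    trivial
  obtain ⟨l, hl, hprod⟩ := Submonoid.exists_list_of_mem_closure hmem
  obtain ⟨l', hlen, hl', hprod'⟩ := Nat.sInf_mem (s := {n | ∃ l : List G, l.length = n ∧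
    (∀ w ∈ l, w ∈ S ∨ w⁻¹ ∈ S) ∧ g⁻¹ * h = l.prod}) ⟨l.length, l, rfl, hl, hprod.symm⟩
  exact ⟨l', hlen ▸ hd, hl', hprod'.symm⟩

def innerBoundary (F W : Set G) : Set G := {x ∈ F | ∃ w ∈ W, x * w ∉ F}

variable (S) in
def wordBoundary (R : ℝ) (F : Set G) : Set G :=
  {γ | (∃ x ∈ F, (wordDist S γ x : ℝ) ≤ R) ∧ (∃ y ∉ F, (wordDist S γ y : ℝ) ≤ R)}

lemma ncard_wordBoundary_le (hS : Subgroup.closure S = ⊤) (hSf : S.Finite) {F : Set G} {R : ℝ}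
    (hF : (innerBoundary F (wordBall S (⌊R⌋₊ + ⌊R⌋₊))).Finite) :
    (wordBoundary S R F).ncard ≤
      (innerBoundary F (wordBall S (⌊R⌋₊ + ⌊R⌋₊))).ncard * (wordBall S ⌊R⌋₊).ncard := by
  set I := innerBoundary F (wordBall S (⌊R⌋₊ + ⌊R⌋₊))
  have hprod : (I ×ˢ wordBall S ⌊R⌋₊).Finite := hF.prod (wordBall_finite hSf _)
  -- `γ = x * (γ⁻¹ * x)⁻¹`, and `x` is an inner boundary point since
  -- `x⁻¹ * y = (γ⁻¹ * x)⁻¹ * (γ⁻¹ * y)`.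
  have hsub : wordBoundary S R F ⊆ (fun p => p.1 * p.2) '' (I ×ˢ wordBall S ⌊R⌋₊) := by
    rintro γ ⟨⟨x, hx, hdx⟩, ⟨y, hy, hdy⟩⟩
    have hu := inv_mem_wordBall (mem_wordBall_of_wordDist_le hS (Nat.le_floor hdx))
    have hv := mem_wordBall_of_wordDist_le hS (Nat.le_floor hdy)
    refine ⟨(x, (γ⁻¹ * x)⁻¹), ⟨⟨hx, _, mul_mem_wordBall hu hv, ?_⟩, hu⟩, by group⟩
    simpa [mul_assoc] using hy
  calc _ ≤ ((fun p => p.1 * p.2) '' (I ×ˢ wordBall S ⌊R⌋₊)).ncard :=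
        Set.ncard_le_ncard hsub (hprod.image _)
    _ ≤ (I ×ˢ wordBall S ⌊R⌋₊).ncard := Set.ncard_image_le hprod
    _ = I.ncard * (wordBall S ⌊R⌋₊).ncard := Set.ncard_prod

end WordMetric

open Finset in
lemma card_filter_lt_or_le_add_le (n c : ℕ) :
    ((range n).filter fun a => a < c ∨ n ≤ a + c).card ≤ 2 * c := by
  calc _ ≤ (range c ∪ Ico (n - c) n).card := card_le_card fun a ha => by
          simp only [mem_filter, mem_range] at ha
          simp only [mem_union, mem_range, mem_Ico]
          omega
    _ ≤ 2 * c := (card_union_le _ _).trans (by simp; omega)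

def gridEdge (n j M K b : ℕ) : Finset (ℕ × ℕ) :=
  (Finset.range n ×ˢ Finset.range j).filter
    fun p => (p.2 < M ∨ j ≤ p.2 + M) ∨ (p.1 < K * b ^ p.2 ∨ n ≤ p.1 + K * b ^ p.2)

open Finset in
lemma card_gridEdge_le {b : ℕ} (hb : 2 ≤ b) (n j M K : ℕ) :
    (gridEdge n j M K b).card ≤ 2 * M * n + 2 * K * b ^ j := by
  have hrows : ((range n ×ˢ range j).filter fun p => p.2 < M ∨ j ≤ p.2 + M).card ≤ 2 * M * n := by
    rw [filter_product_right (fun k => k < M ∨ j ≤ k + M), card_product, card_range, mul_comm]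
    exact Nat.mul_le_mul_right n (card_filter_lt_or_le_add_le j M)
  have hends : ((range n ×ˢ range j).filter
      fun p => p.1 < K * b ^ p.2 ∨ n ≤ p.1 + K * b ^ p.2).card ≤ 2 * K * b ^ j := by
    calc _ ≤ ((range j).biUnion fun k =>
          ((range n).filter fun a => a < K * b ^ k ∨ n ≤ a + K * b ^ k) ×ˢ {k}).card :=
          card_le_card fun p hp => by
            simp only [mem_filter, mem_product] at hp
            simp only [mem_biUnion, mem_product, mem_filter, mem_singleton]
            exact ⟨p.2, hp.1.2, ⟨hp.1.1, hp.2⟩, rfl⟩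
      _ ≤ ∑ k ∈ range j, 2 * K * b ^ k := card_biUnion_le.trans (sum_le_sum fun k _ => by
          rw [card_product, card_singleton, mul_one, mul_assoc]
          exact card_filter_lt_or_le_add_le n _)
      _ ≤ 2 * K * b ^ j := by
          rw [← mul_sum]
          exact Nat.mul_le_mul_left _ (Nat.geomSum_lt hb (by simp)).le
  rw [gridEdge, filter_or]
  exact (card_union_le _ _).trans (add_le_add hrows hends)

namespace BS

variable {m : ℕ}

lemma ext' {g h : BS m} (ha : (g.a : ℚ) = h.a) (hk : g.k = h.k) : g = h :=
  BS.ext (Subtype.ext ha) hk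

def ofNatPair (p : ℕ × ℕ) : BS m := ⟨(p.1 : Zinv m), p.2⟩

@[simp] lemma ofNatPair_a (p : ℕ × ℕ) : ((ofNatPair p : BS m).a : ℚ) = p.1 := rfl

@[simp] lemma ofNatPair_k (p : ℕ × ℕ) : (ofNatPair p : BS m).k = p.2 := rfl

lemma ofNatPair_injective : Function.Injective (ofNatPair (m := m)) := by
  intro p q h
  have ha := congrArg (fun g : BS m => (g.a : ℚ)) h
  have hk := congrArg BS.k h
  simp only [ofNatPair_a, ofNatPair_k, Nat.cast_inj] at ha hk
  exact Prod.ext ha hk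

lemma bsFolner_eq_image (r : ℝ) (j : ℕ) :
    bsFolner m r j = ofNatPair '' ↑(Finset.range ⌈r * (m : ℝ) ^ j⌉₊ ×ˢ Finset.range j) := by
  ext g
  simp only [bsFolner, Set.mem_ofPred_eq, Set.mem_image, Finset.coe_product, Set.mem_prod,
    Finset.coe_range, Set.mem_Iio, Prod.exists]
  constructor
  · rintro ⟨⟨z, hgz⟩, h0, hlt, hk0, hkj⟩
    rw [hgz, Rat.cast_intCast] at h0 hlt
    have hz : ((z.toNat : ℤ)) = z := Int.toNat_of_nonneg (by exact_mod_cast h0)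
    refine ⟨z.toNat, g.k.toNat, ⟨Nat.lt_ceil.mpr ?_, by omega⟩, ?_⟩
    · rwa [← Int.cast_natCast, hz]
    · exact ext' (by rw [ofNatPair_a, hgz]; exact_mod_cast hz) (by simp [hk0])
  · rintro ⟨a, k, ⟨ha, hk⟩, rfl⟩
    refine ⟨⟨a, by simp⟩, by simp, by simpa using Nat.lt_ceil.mp ha, by simp, by simpa using hk⟩

lemma ncard_bsFolner (r : ℝ) (j : ℕ) : (bsFolner m r j).ncard = ⌈r * (m : ℝ) ^ j⌉₊ * j := by
  rw [bsFolner_eq_image, Set.ncard_image_of_injective _ ofNatPair_injective, Set.ncard_coe_finset,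
    Finset.card_product, Finset.card_range, Finset.card_range]

def IsShort (n : ℕ) (g : BS m) : Prop :=
  |g.k| ≤ n ∧ |(g.a : ℚ)| ≤ n * (m : ℚ) ^ n ∧ ∃ z : ℤ, (m : ℚ) ^ n * g.a = z

variable [NeZero m]

lemma mul_a (g h : BS m) : ((g * h).a : ℚ) = g.a + (m : ℚ) ^ g.k * h.a := rfl

lemma mul_k (g h : BS m) : (g * h).k = g.k + h.k := rfl

lemma inv_a (g : BS m) : ((g⁻¹).a : ℚ) = -((m : ℚ) ^ (-g.k) * g.a) := rfl

lemma inv_k (g : BS m) : (g⁻¹).k = -g.k := rfl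

lemma closure_bsGen : Subgroup.closure (bsGen m) = ⊤ := by
  set H := Subgroup.closure (bsGen m)
  have hgen_a : (⟨1, 0⟩ : BS m) ∈ H := Subgroup.subset_closure (Or.inl rfl)
  have hgen_t : (⟨0, 1⟩ : BS m) ∈ H := Subgroup.subset_closure (Or.inr rfl)
  have hcol : ∀ k : ℤ, (⟨0, k⟩ : BS m) ∈ H := by
    intro k
    induction k using Int.induction_on with
    | zero => exact H.one_mem
    | succ k ih =>
      convert H.mul_mem ih hgen_t using 1
      exact ext' (by simp [mul_a]) rfl
    | pred k ih =>
      convert H.mul_mem ih (H.inv_mem hgen_t) using 1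
      exact ext' (by simp [mul_a, inv_a]) (by simp [mul_k, inv_k]; ring)
  -- `ℤ[1/m]` is additively generated by the powers `m⁻¹ ^ n`, which are conjugates of `(1, 0)`.
  have hrow : ∀ (q : ℚ) (hq : q ∈ Zinv m), (⟨⟨q, hq⟩, 0⟩ : BS m) ∈ H := fun q hq =>
    AddSubgroup.closure_induction
      (p := fun q hq => (⟨⟨q, Subring.mem_closure_iff.mpr hq⟩, 0⟩ : BS m) ∈ H)
      (fun _ hpow => by
        obtain ⟨n, rfl⟩ := Submonoid.mem_closure_singleton.mp hpow
        convert H.mul_mem (H.mul_mem (hcol (-n)) hgen_a) (hcol n) using 1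
        exact ext' (by simp [mul_a, zpow_neg]) (by simp [mul_k]))
      H.one_mem
      (fun _ _ _ _ ih ih' => by
        convert H.mul_mem ih ih' using 1
        exact ext' (by simp [mul_a]) rfl)
      (fun _ _ ih => by
        convert H.inv_mem ih using 1
        exact ext' (by simp [inv_a]) rfl)
      (Subring.mem_closure_iff.mp hq)
  refine eq_top_iff.mpr fun g _ => ?_
  convert H.mul_mem (hrow g.a g.a.2) (hcol g.k) using 1
  exact ext' (by simp [mul_a]) (by simp [mul_k])

lemma isShort_one (n : ℕ) : IsShort n (1 : BS m) := by
  refine ⟨?_, ?_, 0, ?_⟩ <;> simp [show (1 : BS m) = ⟨0, 0⟩ from rfl]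
  positivity

lemma letter_coords {w : BS m} (hw : w ∈ bsGen m ∨ w⁻¹ ∈ bsGen m) :
    |w.k| ≤ 1 ∧ ∃ z : ℤ, |z| ≤ 1 ∧ (w.a : ℚ) = z := by
  obtain (rfl | rfl) | h | h := hw
  · exact ⟨by simp, 1, by simp, by simp⟩
  · exact ⟨by simp, 0, by simp, by simp⟩
  · rw [← inv_inv w, h]
    exact ⟨by simp [inv_k], -1, by simp, by simp [inv_a]⟩
  · rw [← inv_inv w, h]
    exact ⟨by simp [inv_k], 0, by simp, by simp [inv_a]⟩

lemma IsShort.letter_mul (hm : 2 ≤ m) {n : ℕ} {w g : BS m} (hg : IsShort n g)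
    (hw : w ∈ bsGen m ∨ w⁻¹ ∈ bsGen m) : IsShort (n + 1) (w * g) := by
  obtain ⟨hgk, hga, zg, hzg⟩ := hg
  obtain ⟨hwk, zw, hzw, hwa⟩ := letter_coords hw
  have hm1 : (1 : ℚ) ≤ m := by exact_mod_cast (by omega : 1 ≤ m)
  have hpow : (m : ℚ) ^ w.k ≤ m := by
    simpa using zpow_le_zpow_right₀ hm1 (abs_le.mp hwk).2
  refine ⟨?_, ?_, ?_⟩
  · rw [mul_k]; push_cast
    exact (abs_add_le _ _).trans (by linarith)
  · rw [mul_a]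
    calc |(w.a : ℚ) + (m : ℚ) ^ w.k * g.a| ≤ 1 + m * (n * (m : ℚ) ^ n) := by
          refine (abs_add_le _ _).trans (add_le_add ?_ ?_)
          · rw [hwa]; exact_mod_cast hzw
          · rw [abs_mul, abs_of_pos (zpow_pos (by positivity) _)]
            exact mul_le_mul hpow hga (abs_nonneg _) (by positivity)
      _ ≤ (n + 1 : ℕ) * (m : ℚ) ^ (n + 1) := by
          push_cast
          rw [pow_succ]
          nlinarith [one_le_pow₀ (n := n) hm1]
  · -- `m ^ (n + 1 + w.k) * g.a` is integral because `n + 1 + w.k ≥ n`.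
    obtain ⟨e, he⟩ : ∃ e : ℕ, w.k + 1 = e := ⟨(w.k + 1).toNat, by have := abs_le.mp hwk; omega⟩
    refine ⟨m ^ (n + 1) * zw + m ^ e * zg, ?_⟩
    have hk : (m : ℚ) ^ (n + 1) * (m : ℚ) ^ w.k = (m : ℚ) ^ e * (m : ℚ) ^ n := by
      rw [← zpow_natCast, ← zpow_natCast, ← zpow_natCast, ← zpow_add₀ (by positivity),
        ← zpow_add₀ (by positivity), ← he]
      push_cast; ring_nf
    rw [mul_a, hwa]
    push_cast
    linear_combination (m : ℚ) ^ e * hzg + (g.a : ℚ) * hk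

lemma isShort_of_mem_wordBall (hm : 2 ≤ m) {n : ℕ} {g : BS m} (hg : g ∈ wordBall (bsGen m) n) :
    IsShort n g := by
  obtain ⟨l, hlen, hl, rfl⟩ := hg
  induction l generalizing n with
  | nil => exact isShort_one n
  | cons w l ih =>
    obtain ⟨n, rfl⟩ : ∃ n', n = n' + 1 := Nat.exists_eq_add_one.mpr (by simp at hlen; omega)
    rw [List.prod_cons]
    exact (ih (by simpa using hlen) fun v hv => hl v (List.mem_cons_of_mem _ hv)).letter_mul hm
      (hl w List.mem_cons_self)

lemma ofNatPair_mul_mem_bsFolner {r : ℝ} {j M a k : ℕ} {w : BS m} (hw : IsShort M w)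
    (hk : M ≤ k) (hkj : k + M < j) (ha : M * m ^ M * m ^ k ≤ a)
    (han : a + M * m ^ M * m ^ k < ⌈r * (m : ℝ) ^ j⌉₊) :
    ofNatPair (a, k) * w ∈ bsFolner m r j := by
  obtain ⟨hwk, hwa, zw, hzw⟩ := hw
  obtain ⟨d, rfl⟩ := Nat.exists_eq_add_of_le hk
  have hshift : (m : ℚ) ^ ((M + d : ℕ) : ℤ) * w.a = (m ^ d * zw : ℤ) := by
    rw [zpow_natCast, pow_add]
    push_cast
    linear_combination (m : ℚ) ^ d * hzw
  have hbound : |(m ^ d * zw : ℤ)| ≤ (M * m ^ M * m ^ (M + d) : ℕ) := by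
    have : |(m : ℚ) ^ ((M + d : ℕ) : ℤ) * w.a| ≤ ((M * m ^ M * m ^ (M + d) : ℕ) : ℚ) := by
      rw [abs_mul, zpow_natCast, abs_of_nonneg (by positivity)]
      push_cast
      nlinarith [mul_le_mul_of_nonneg_left hwa (by positivity : (0 : ℚ) ≤ m ^ (M + d))]
    rw [hshift] at this
    exact_mod_cast this
  have hz := abs_le.mp hbound
  obtain ⟨z, hzdef⟩ : ∃ z : ℤ, z = a + m ^ d * zw := ⟨_, rfl⟩
  have hz0 : 0 ≤ z := by rw [hzdef]; push_cast at hz ha ⊢; linarith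
  have hzn : z.toNat < ⌈r * (m : ℝ) ^ j⌉₊ := by
    have : z < ⌈r * (m : ℝ) ^ j⌉₊ := by rw [hzdef]; push_cast at hz han ⊢; linarith
    omega
  have hza : ((ofNatPair (a, M + d) * w).a : ℚ) = z := by
    rw [mul_a, ofNatPair_a, ofNatPair_k, hshift, hzdef]
    push_cast; ring
  refine ⟨⟨z, hza⟩, by rw [hza]; exact_mod_cast hz0, ?_, ?_, ?_⟩
  · have := Nat.lt_ceil.mp hzn
    rwa [← Int.cast_natCast, Int.toNat_of_nonneg hz0, ← Rat.cast_intCast, ← hza] at this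
  all_goals have := abs_le.mp hwk; simp only [mul_k, ofNatPair_k]; omega

lemma innerBoundary_bsFolner_subset (hm : 2 ≤ m) (r : ℝ) (j M : ℕ) :
    innerBoundary (bsFolner m r j) (wordBall (bsGen m) M) ⊆
      ofNatPair '' ↑(gridEdge ⌈r * (m : ℝ) ^ j⌉₊ j M (M * m ^ M) m) := by
  rintro x ⟨hx, w, hw, hxw⟩
  rw [bsFolner_eq_image] at hx
  obtain ⟨⟨a, k⟩, hp, rfl⟩ := hx
  refine ⟨(a, k), Finset.mem_filter.mpr ⟨hp, ?_⟩, rfl⟩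
  by_contra hint
  push Not at hint
  simp only at hint
  exact hxw (ofNatPair_mul_mem_bsFolner (isShort_of_mem_wordBall hm hw) (by omega) (by omega)
    (by omega) (by omega))

lemma ncard_bsBdry_bsFolner_le (hm : 2 ≤ m) {r : ℝ} (hr : 0 ≤ r) (R : ℝ) :
    ∃ C : ℝ, 0 < C ∧ ∀ j : ℕ, ((bsBdry m R (bsFolner m r j)).ncard : ℝ) ≤ C * (m : ℝ) ^ j := by
  set N := ⌊R⌋₊
  set M := N + N
  set c : ℝ := ((wordBall (bsGen m) N).ncard : ℝ) with hc
  refine ⟨(2 * M * (r + 1) + 2 * (M * m ^ M)) * c + 1, by positivity, fun j => ?_⟩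
  set n := ⌈r * (m : ℝ) ^ j⌉₊
  have hI := innerBoundary_bsFolner_subset hm r j M
  have hIfin := ((gridEdge n j M (M * m ^ M) m).finite_toSet.image _).subset hI
  have hIcard : (innerBoundary (bsFolner m r j) (wordBall (bsGen m) M)).ncard ≤
      2 * M * n + 2 * (M * m ^ M) * m ^ j := calc
    _ ≤ (ofNatPair '' ↑(gridEdge n j M (M * m ^ M) m) : Set (BS m)).ncard :=
      Set.ncard_le_ncard hI (Set.toFinite _)
    _ = (gridEdge n j M (M * m ^ M) m).card := by
      rw [Set.ncard_image_of_injective _ ofNatPair_injective, Set.ncard_coe_finset]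
    _ ≤ _ := card_gridEdge_le hm n j M _
  have hn : (n : ℝ) ≤ (r + 1) * (m : ℝ) ^ j := by
    have := Nat.ceil_lt_add_one (by positivity : 0 ≤ r * (m : ℝ) ^ j)
    nlinarith [one_le_pow₀ (n := j) (by exact_mod_cast (by omega : 1 ≤ m) : (1 : ℝ) ≤ m)]
  have hbdry : (bsBdry m R (bsFolner m r j)).ncard ≤
      (innerBoundary (bsFolner m r j) (wordBall (bsGen m) M)).ncard *
        (wordBall (bsGen m) N).ncard :=
    ncard_wordBoundary_le closure_bsGen ((Set.finite_singleton _).insert _) hIfin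
  calc ((bsBdry m R (bsFolner m r j)).ncard : ℝ)
      ≤ (innerBoundary (bsFolner m r j) (wordBall (bsGen m) M)).ncard * c := by
        rw [hc]; exact_mod_cast hbdry
    _ ≤ (2 * M * n + 2 * (M * m ^ M) * m ^ j : ℕ) * c := by gcongr
    _ ≤ (2 * M * ((r + 1) * m ^ j) + 2 * (M * m ^ M) * m ^ j) * c := by
        push_cast; gcongr
    _ ≤ ((2 * M * (r + 1) + 2 * (M * m ^ M)) * c + 1) * (m : ℝ) ^ j := by
        nlinarith [pow_pos (by exact_mod_cast (by omega : 0 < m) : (0 : ℝ) < m) j]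

end BS

theorem bs_folner_boundary_estimate_general (m : ℕ) [NeZero m] (hm : 2 ≤ m)
    (r : ℝ) (hr : 0 < r) (R : ℝ) :
    ∃ C : ℝ, 0 < C ∧
      (∀ j : ℕ, 1 ≤ j →
        ((bsBdry m R (bsFolner m r j)).ncard : ℝ) ≤ C * (m : ℝ) ^ j) ∧
      Filter.Tendsto
        (fun j : ℕ => ((bsBdry m R (bsFolner m r j)).ncard : ℝ) /
          ((bsFolner m r j).ncard : ℝ))
        Filter.atTop (nhds 0) := by
  obtain ⟨C, hC, hbound⟩ := BS.ncard_bsBdry_bsFolner_le hm hr.le R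
  refine ⟨C, hC, fun j _ => hbound j, ?_⟩
  have hlim : Filter.Tendsto (fun j : ℕ => C / r * (1 / (j : ℝ))) Filter.atTop (nhds 0) := by
    simpa using tendsto_one_div_atTop_nhds_zero_nat.const_mul (C / r)
  refine squeeze_zero (fun j => by positivity) (fun j => ?_) hlim
  rcases j.eq_zero_or_pos with rfl | hj
  · simp [BS.ncard_bsFolner]
  have hF : r * (m : ℝ) ^ j * j ≤ (bsFolner m r j).ncard := by
    rw [BS.ncard_bsFolner, Nat.cast_mul]
    gcongr
    exact Nat.le_ceil _
  calc _ ≤ C * (m : ℝ) ^ j / (r * (m : ℝ) ^ j * j) :=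
        div_le_div₀ (by positivity) (hbound j) (by positivity) hF
    _ = C / r * (1 / (j : ℝ)) := by field_simp

/-- The boundary of the Følner set F_j has at most C·m^j elements, so the F_j form a
Følner sequence in Γ_m. -/
theorem bs_folner_boundary_estimate (m : ℕ) [NeZero m] (hm : 2 ≤ m)
    (r : ℝ) (hr : 0 < r) (R : ℝ) (hR : 0 < R) :
    ∃ C : ℝ, 0 < C ∧
      (∀ j : ℕ, 1 ≤ j →
        ((bsBdry m R (bsFolner m r j)).ncard : ℝ) ≤ C * (m : ℝ) ^ j) ∧
      Filter.Tendsto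
        (fun j : ℕ => ((bsBdry m R (bsFolner m r j)).ncard : ℝ) /
          ((bsFolner m r j).ncard : ℝ))
        Filter.atTop (nhds 0) :=
  bs_folner_boundary_estimate_general m hm r hr R
end
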